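/- arXiv:2109.10222 — 8 statements merged into one kernel-verified Lean document; each statement's English description precedes it below -/
import Mathlib

section
/- For every positive integer m, any multiset F of non-empty subsets of [m] that is uniquely resolvable into 2 classes has size at most m+1. Consequently g(2,m) = m+1, where g(n,m) is the maximum size of a multiset of non-empty subsets of [m] uniquely resolvable into n classes. -/
open Finset

/-- `f` assigns each component (indexed by `ι`) to one of `n` classes so that the
components in each class are pairwise disjoint with union `[m]`: every `x ∈ [m]`
lies in exactly one component of each class. -/
def IsResolution {ι : Type*} {m n : ℕ} (C : ι → Finset (Fin m)) (f : ι → Fin n) : Prop :=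
  ∀ (i : Fin n) (x : Fin m), ∃! j : ι, f j = i ∧ x ∈ C j

/-- The multiset of nonempty subsets of `[m]` given by `C` is uniquely resolvable
into `n` classes: a resolution exists and is unique up to renaming the classes. -/
def UniquelyResolvable {ι : Type*} {m : ℕ} (n : ℕ) (C : ι → Finset (Fin m)) : Prop :=
  (∀ j, (C j).Nonempty) ∧ ∃ f : ι → Fin n, IsResolution C f ∧
    ∀ f' : ι → Fin n, IsResolution C f' → ∃ σ : Equiv.Perm (Fin n), f' = σ ∘ f

/-- `g n m` : maximum size of a multiset of nonempty subsets of `[m]` that is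
uniquely resolvable into `n` classes. -/
noncomputable def g (n m : ℕ) : ℕ :=
  sSup {k | ∃ C : Fin k → Finset (Fin m), UniquelyResolvable n C}

/-- `P k m` : the largest `N` such that there is a multiset of nonempty subsets of `[m]`
uniquely resolvable into `N` classes in which every class has size exactly `k`. -/
noncomputable def P (k m : ℕ) : ℕ :=
  sSup {N | ∃ C : Fin N × Fin k → Finset (Fin m),
    UniquelyResolvable N C ∧ IsResolution C Prod.fst}

/-- The binary entropy function. -/
noncomputable def H2 (x : ℝ) : ℝ := -x * Real.logb 2 x - (1 - x) * Real.logb 2 (1 - x)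

/-!
In a resolution into `n` classes every element of `[m]` lies in exactly one set of each class,
so it makes at most `n.choose 2` pairs of sets intersect, and the intersection graph of the family
has at most `m * n.choose 2` edges. If this graph were disconnected, applying a nontrivial
permutation of the classes on one component only would give a second resolution that is not a
renaming of the first. A connected graph on `k` vertices has at least `k - 1` edges, so
`k ≤ m * n.choose 2 + 1`, which is `m + 1` for `n = 2`. The `m` singletons together with `[m]`
itself attain this bound.
-/

section

variable {ι α : Type*} {m n : ℕ}

def intersectionGraph (C : ι → Finset α) : SimpleGraph ι where
  Adj a b := a ≠ b ∧ ¬Disjoint (C a) (C b)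
  symm := ⟨fun _ _ h => ⟨h.1.symm, by rw [disjoint_comm]; exact h.2⟩⟩
  loopless := ⟨fun _ h => h.1 rfl⟩

lemma intersectionGraph_adj_of_mem {C : ι → Finset α} {a b : ι} {x : α} (hab : a ≠ b)
    (ha : x ∈ C a) (hb : x ∈ C b) : (intersectionGraph C).Adj a b :=
  ⟨hab, not_disjoint_iff.mpr ⟨x, ha, hb⟩⟩

namespace IsResolution

variable {C : ι → Finset (Fin m)} {f : ι → Fin n}

noncomputable def partner (hf : IsResolution C f) (i : Fin n) (x : Fin m) : ι :=
  (hf i x).exists.choose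

lemma partner_spec (hf : IsResolution C f) (i : Fin n) (x : Fin m) :
    f (hf.partner i x) = i ∧ x ∈ C (hf.partner i x) :=
  (hf i x).exists.choose_spec

lemma eq_partner (hf : IsResolution C f) {j : ι} {x : Fin m} (hx : x ∈ C j) :
    j = hf.partner (f j) x :=
  (hf (f j) x).unique ⟨rfl, hx⟩ (hf.partner_spec _ x)

lemma apply_ne_of_mem (hf : IsResolution C f) {a b : ι} {x : Fin m} (hab : a ≠ b)
    (ha : x ∈ C a) (hb : x ∈ C b) : f a ≠ f b :=
  fun h => hab ((hf (f a) x).unique ⟨rfl, ha⟩ ⟨h.symm, hb⟩)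

lemma of_forall_exists_perm (hf : IsResolution C f) {f' : ι → Fin n}
    (h : ∀ x, ∃ τ : Equiv.Perm (Fin n), ∀ j, x ∈ C j → f' j = τ (f j)) :
    IsResolution C f' := by
  intro i x
  obtain ⟨τ, hτ⟩ := h x
  obtain ⟨j, ⟨hfj, hxj⟩, hj⟩ := hf (τ.symm i) x
  refine ⟨j, ⟨by rw [hτ j hxj, hfj, Equiv.apply_symm_apply], hxj⟩, fun j' ⟨hfj', hxj'⟩ => ?_⟩
  exact hj j' ⟨by rw [← hfj', hτ j' hxj', Equiv.symm_apply_apply], hxj'⟩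

lemma piecewise_perm (hf : IsResolution C f) (σ : Equiv.Perm (Fin n)) (S : Set ι)
    [DecidablePred (· ∈ S)] (hS : ∀ a b, (intersectionGraph C).Adj a b → a ∈ S → b ∈ S) :
    IsResolution C fun j => if j ∈ S then σ (f j) else f j := by
  refine hf.of_forall_exists_perm fun x => ?_
  by_cases hx : ∃ j₀ ∈ S, x ∈ C j₀
  · obtain ⟨j₀, hj₀S, hxj₀⟩ := hx
    refine ⟨σ, fun j hxj => if_pos ?_⟩
    obtain rfl | hne := eq_or_ne j₀ j
    · exact hj₀S
    · exact hS _ _ (intersectionGraph_adj_of_mem hne hxj₀ hxj) hj₀S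
  · push Not at hx
    exact ⟨1, fun j hxj => if_neg fun hjS => hx j hjS hxj⟩

lemma card_edgeSet_intersectionGraph_le [Finite ι] (hf : IsResolution C f) :
    Nat.card (intersectionGraph C).edgeSet ≤ m * n.choose 2 := by
  classical
  have := Fintype.ofFinite ι
  let pairs := (univ : Finset (Fin m)) ×ˢ (⊤ : SimpleGraph (Fin n)).edgeFinset
  have hsub :
      (intersectionGraph C).edgeFinset ⊆ pairs.image fun p => p.2.map (hf.partner · p.1) := by
    intro e he
    induction e using Sym2.ind with
    | h a b =>
      obtain ⟨hab, hdisj⟩ := SimpleGraph.mem_edgeFinset.mp he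
      obtain ⟨x, hxa, hxb⟩ := not_disjoint_iff.mp hdisj
      refine mem_image.mpr ⟨(x, s(f a, f b)), ?_, ?_⟩
      · simpa [pairs] using hf.apply_ne_of_mem hab hxa hxb
      · simp only [Sym2.map_mk, ← hf.eq_partner hxa, ← hf.eq_partner hxb]
  calc Nat.card (intersectionGraph C).edgeSet = #(intersectionGraph C).edgeFinset := by
        rw [SimpleGraph.edgeFinset_card, Nat.card_eq_fintype_card]
    _ ≤ #pairs := (card_le_card hsub).trans card_image_le
    _ = m * n.choose 2 := by
        rw [card_product, card_univ, SimpleGraph.card_edgeFinset_top_eq_card_choose_two,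
          Fintype.card_fin, Fintype.card_fin]

end IsResolution

namespace UniquelyResolvable

variable {C : ι → Finset (Fin m)}

lemma preconnected (hn : 2 ≤ n) (h : UniquelyResolvable n C) :
    (intersectionGraph C).Preconnected := by
  classical
  obtain ⟨hne, f, hf, huniq⟩ := h
  intro u v
  by_contra huv
  obtain ⟨x, hxv⟩ := hne v
  set w := hf.partner (f u) x
  have hvw : (intersectionGraph C).Reachable v w := by
    obtain hvw | hvw := eq_or_ne v w
    · exact hvw ▸ .rfl
    · exact (intersectionGraph_adj_of_mem hvw hxv (hf.partner_spec _ x).2).reachable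
  have : Nontrivial (Fin n) := Fin.nontrivial_iff_two_le.mpr hn
  obtain ⟨c, hc⟩ := exists_ne (f u)
  obtain ⟨τ, hτ⟩ := huniq _ (hf.piecewise_perm (Equiv.swap (f u) c)
    {j | (intersectionGraph C).Reachable u j} fun a b hab hua => hua.trans hab.reachable)
  -- `w` is in the component of `v` and in the class of `u`: `τ` must both move and fix `f u`.
  have hτu : τ (f u) = c := by simpa using (congrFun hτ u).symm
  have huw : ¬(intersectionGraph C).Reachable u w := fun huw => huv (huw.trans hvw.symm)
  have hfw : f w = f u := (hf.partner_spec _ x).1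
  have hτw : τ (f u) = f u := by simpa [huw, hfw] using (congrFun hτ w).symm
  exact hc (hτu.symm.trans hτw)

lemma card_le [Finite ι] (hn : 2 ≤ n) (h : UniquelyResolvable n C) :
    Nat.card ι ≤ m * n.choose 2 + 1 := by
  obtain hι | hι := isEmpty_or_nonempty ι
  · simp
  have hconn : (intersectionGraph C).Connected := ⟨h.preconnected hn⟩
  obtain ⟨-, f, hf, -⟩ := h
  exact hconn.card_vert_le_card_edgeSet_add_one.trans
    (Nat.add_le_add_right hf.card_edgeSet_intersectionGraph_le 1)

end UniquelyResolvable

def starFamily (m : ℕ) : Fin (m + 1) → Finset (Fin m) :=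
  Fin.lastCases univ fun i => {i}

lemma isResolution_starFamily :
    IsResolution (starFamily m) (Fin.lastCases 1 fun _ => 0 : Fin (m + 1) → Fin 2) := by
  intro i x
  fin_cases i <;> simp [ExistsUnique, Fin.forall_fin_succ', starFamily]

lemma uniquelyResolvable_starFamily (hm : 0 < m) : UniquelyResolvable 2 (starFamily m) := by
  have : Nonempty (Fin m) := ⟨⟨0, hm⟩⟩
  refine ⟨fun j => ?_, _, isResolution_starFamily, fun f' hf' => ?_⟩
  · induction j using Fin.lastCases <;> simp [starFamily]
  have hne (i : Fin m) : f' i.castSucc ≠ f' (Fin.last m) :=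
    hf'.apply_ne_of_mem (x := i) (Fin.castSucc_ne_last i)
      (by simp [starFamily]) (by simp [starFamily])
  have hfin2 (b c : Fin 2) (hbc : b ≠ c) : b = Equiv.swap 1 c 0 := by revert b c; decide
  refine ⟨Equiv.swap 1 (f' (Fin.last m)), funext fun j => ?_⟩
  induction j using Fin.lastCases with
  | last => simp
  | cast i => simpa using hfin2 _ _ (hne i)

end

/-- Any multiset of nonempty subsets of `[m]` uniquely resolvable into 2 classes has
size at most `m+1`; consequently `g 2 m = m + 1`. -/
theorem stmt1 (m : ℕ) (hm : 0 < m) :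
    (∀ (k : ℕ) (C : Fin k → Finset (Fin m)), UniquelyResolvable 2 C → k ≤ m + 1) ∧
    g 2 m = m + 1 := by
  have hbound (k : ℕ) (C : Fin k → Finset (Fin m)) (h : UniquelyResolvable 2 C) :
      k ≤ m + 1 := by
    simpa using h.card_le le_rfl
  exact ⟨hbound, IsGreatest.csSup_eq
    ⟨⟨starFamily m, uniquelyResolvable_starFamily hm⟩, fun k ⟨C, hC⟩ => hbound k C hC⟩⟩
end

section
/- (Subset Criterion) If F is a multiset of non-empty subsets of [m] uniquely resolvable into n classes with class sizes d_1,...,d_n, then the sum over i of (2^{d_i} - 2) is at most 2^m - 2. -/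
open Finset

/-- Subset criterion: if `C` is uniquely resolvable into `n` classes with class sizes
`d i` (sizes of the fibers of a resolution `f`), then `∑ (2 ^ d i - 2) ≤ 2 ^ m - 2`. -/
theorem stmt2 (m n k : ℕ) (hm : 0 < m) (C : Fin k → Finset (Fin m))
    (hC : UniquelyResolvable n C) (f : Fin k → Fin n) (hf : IsResolution C f) :
    ∑ i : Fin n, (2 ^ (Finset.univ.filter (fun j => f j = i)).card - 2) ≤ 2 ^ m - 2 := by
  classical
  obtain ⟨hne, f₀, hf₀, huniq0⟩ := hC
  obtain ⟨τ, hτ⟩ := huniq0 f hf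
  have huniq : ∀ f' : Fin k → Fin n, IsResolution C f' →
      ∃ σ : Equiv.Perm (Fin n), f' = σ ∘ f := by
    intro f' hf'
    obtain ⟨σ, hσ⟩ := huniq0 f' hf'
    refine ⟨σ * τ⁻¹, ?_⟩
    funext j
    have h1 : f' j = σ (f₀ j) := congrFun hσ j
    have h2 : f j = τ (f₀ j) := congrFun hτ j
    simp [h1, h2, Equiv.Perm.mul_apply]
  have hfE : ∀ c x, ∃ j, (f j = c ∧ x ∈ C j) ∧ ∀ j', f j' = c → x ∈ C j' → j' = j := by
    intro c x
    obtain ⟨j, hj, hu⟩ := hf c x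
    exact ⟨j, hj, fun j' ha hb => hu j' ⟨ha, hb⟩⟩
  choose u hu hu2 using hfE
  set T : Fin n → Finset (Fin k) := fun i => univ.filter (fun j => f j = i) with hT
  have hmemT : ∀ i j, j ∈ T i ↔ f j = i := by intro i j; simp [hT]
  have hTne : ∀ i, (T i).Nonempty := fun i => ⟨u i ⟨0, hm⟩, (hmemT _ _).2 (hu i ⟨0, hm⟩).1⟩
  have within : ∀ (i : Fin n) (A A' : Finset (Fin k)), A ⊆ T i → A' ⊆ T i →
      A.biUnion C ⊆ A'.biUnion C → A ⊆ A' := by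
    intro i A A' hA hA' h j hj
    obtain ⟨x, hx⟩ := hne j
    obtain ⟨j', hj', hxj'⟩ := Finset.mem_biUnion.1 (h (Finset.mem_biUnion.2 ⟨j, hj, hx⟩))
    have e1 := hu2 i x j ((hmemT i j).1 (hA hj)) hx
    have e2 := hu2 i x j' ((hmemT i j').1 (hA' hj')) hxj'
    rwa [show j = j' from e1.trans e2.symm]
  have notuniv : ∀ (i : Fin n) (A : Finset (Fin k)), A ⊆ T i → A ≠ T i →
      A.biUnion C ≠ univ := by
    intro i A hA hAne hU
    obtain ⟨j₀, hj₀T, hj₀A⟩ := Finset.exists_of_ssubset (hA.ssubset_of_ne hAne)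
    obtain ⟨x, hx⟩ := hne j₀
    have hxS : x ∈ A.biUnion C := hU ▸ Finset.mem_univ x
    obtain ⟨a, ha, hxa⟩ := Finset.mem_biUnion.1 hxS
    have e1 := hu2 i x a ((hmemT i a).1 (hA ha)) hxa
    have e2 := hu2 i x j₀ ((hmemT i j₀).1 hj₀T) hx
    exact hj₀A (by rwa [show j₀ = a from e2.trans e1.symm])
  have cross : ∀ (i i' : Fin n) (A B : Finset (Fin k)), i ≠ i' →
      A ⊆ T i → B ⊆ T i' → A.Nonempty → A ≠ T i →
      A.biUnion C = B.biUnion C → False := by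
    intro i i' A B hii' hA hB hAne hAprop hSeq
    have hfA : ∀ j ∈ A, f j = i := fun j hj => (hmemT i j).1 (hA hj)
    have hfB : ∀ j ∈ B, f j = i' := fun j hj => (hmemT i' j).1 (hB hj)
    have memSA : ∀ x, x ∈ A.biUnion C ↔ u i x ∈ A := by
      intro x
      constructor
      · intro hx
        obtain ⟨a, ha, hxa⟩ := Finset.mem_biUnion.1 hx
        rwa [← hu2 i x a (hfA a ha) hxa]
      · intro h
        exact Finset.mem_biUnion.2 ⟨u i x, h, (hu i x).2⟩
    have memSB : ∀ x, x ∈ A.biUnion C ↔ u i' x ∈ B := by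
      intro x
      rw [hSeq]
      constructor
      · intro hx
        obtain ⟨a, ha, hxa⟩ := Finset.mem_biUnion.1 hx
        rwa [← hu2 i' x a (hfB a ha) hxa]
      · intro h
        exact Finset.mem_biUnion.2 ⟨u i' x, h, (hu i' x).2⟩
    have hAB : ∀ j, j ∈ A → j ∉ B := fun j hj hj' => hii' ((hfA j hj).symm.trans (hfB j hj'))
    have hBA : ∀ j, j ∈ B → j ∉ A := fun j hj hj' => hAB j hj' hj
    set f' : Fin k → Fin n := fun j => if j ∈ A then i' else if j ∈ B then i else f j
      with hf'def
    have hf'A : ∀ j ∈ A, f' j = i' := by intro j hj; simp [hf'def, hj]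
    have hf'B : ∀ j ∈ B, f' j = i := by intro j hj; simp [hf'def, hj, hBA j hj]
    have hf'O : ∀ j, j ∉ A → j ∉ B → f' j = f j := by
      intro j h1 h2; simp [hf'def, h1, h2]
    -- u i' x is never in A; u i x never in B; u c x (c ≠ i, i') in neither
    have huiA : ∀ x, u i' x ∉ A := fun x hx => hii' ((hfA _ hx).symm.trans (hu i' x).1)
    have huiB : ∀ x, u i x ∉ B := fun x hx => hii' (((hu i x).1.symm.trans (hfB _ hx)))
    have hres : IsResolution C f' := by
      intro c x
      by_cases hc1 : c = i
      · subst hc1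
        by_cases hx : x ∈ A.biUnion C
        · refine ⟨u i' x, ⟨hf'B _ ((memSB x).1 hx), (hu i' x).2⟩, ?_⟩
          rintro j ⟨hj1, hj2⟩
          by_cases hjA : j ∈ A
          · exact absurd (hj1.symm.trans (hf'A j hjA)) hii'
          by_cases hjB : j ∈ B
          · exact hu2 i' x j (hfB j hjB) hj2
          · -- f j = c = i, so j = u i x ∈ A since x ∈ S, but j ∉ A
            have : f j = c := (hf'O j hjA hjB).symm.trans hj1
            have hju : j = u c x := hu2 c x j this hj2
            exact absurd ((memSA x).1 hx) (hju ▸ hjA)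
        · refine ⟨u c x, ⟨?_, (hu c x).2⟩, ?_⟩
          · have h1 : u c x ∉ A := fun h => hx ((memSA x).2 h)
            exact (hf'O _ h1 (huiB x)).trans (hu c x).1
          rintro j ⟨hj1, hj2⟩
          by_cases hjA : j ∈ A
          · exact absurd (hj1.symm.trans (hf'A j hjA)) hii'
          by_cases hjB : j ∈ B
          · -- j = u i' x ∈ B so x ∈ S, contradiction
            have hju : j = u i' x := hu2 i' x j (hfB j hjB) hj2
            exact absurd ((memSB x).2 (hju ▸ hjB)) hx
          · exact hu2 c x j ((hf'O j hjA hjB).symm.trans hj1) hj2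
      · by_cases hc2 : c = i'
        · subst hc2
          by_cases hx : x ∈ A.biUnion C
          · refine ⟨u i x, ⟨hf'A _ ((memSA x).1 hx), (hu i x).2⟩, ?_⟩
            rintro j ⟨hj1, hj2⟩
            by_cases hjA : j ∈ A
            · exact hu2 i x j (hfA j hjA) hj2
            by_cases hjB : j ∈ B
            · exact absurd ((hf'B j hjB).symm.trans hj1) hii'
            · have hju : j = u c x := hu2 c x j ((hf'O j hjA hjB).symm.trans hj1) hj2
              exact absurd ((memSB x).1 hx) (hju ▸ hjB)
          · refine ⟨u c x, ⟨?_, (hu c x).2⟩, ?_⟩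
            · have h1 : u c x ∉ B := fun h => hx ((memSB x).2 h)
              exact (hf'O _ (huiA x) h1).trans (hu c x).1
            rintro j ⟨hj1, hj2⟩
            by_cases hjA : j ∈ A
            · have hju : j = u i x := hu2 i x j (hfA j hjA) hj2
              exact absurd ((memSA x).2 (hju ▸ hjA)) hx
            by_cases hjB : j ∈ B
            · exact absurd ((hf'B j hjB).symm.trans hj1) hii'
            · exact hu2 c x j ((hf'O j hjA hjB).symm.trans hj1) hj2
        · refine ⟨u c x, ⟨?_, (hu c x).2⟩, ?_⟩
          · have h1 : u c x ∉ A := fun h => hc1 ((hu c x).1.symm.trans (hfA _ h)) 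
            have h2 : u c x ∉ B := fun h => hc2 ((hu c x).1.symm.trans (hfB _ h))
            exact (hf'O _ h1 h2).trans (hu c x).1
          rintro j ⟨hj1, hj2⟩
          by_cases hjA : j ∈ A
          · exact absurd (hj1.symm.trans (hf'A j hjA)) hc2
          by_cases hjB : j ∈ B
          · exact absurd (hj1.symm.trans (hf'B j hjB)) hc1
          · exact hu2 c x j ((hf'O j hjA hjB).symm.trans hj1) hj2
    obtain ⟨σ, hσ⟩ := huniq f' hres
    obtain ⟨a, ha⟩ := hAne
    obtain ⟨j₀, hj₀T, hj₀A⟩ := Finset.exists_of_ssubset (hA.ssubset_of_ne hAprop)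
    have h1 : σ i = i' := by
      have := congrFun hσ a
      rw [hf'A a ha, Function.comp_apply, hfA a ha] at this
      exact this.symm
    have h2 : σ i = i := by
      have := congrFun hσ j₀
      have hj₀B : j₀ ∉ B := fun hb => hii' (((hmemT i j₀).1 hj₀T).symm.trans (hfB j₀ hb))
      rw [hf'O j₀ hj₀A hj₀B, Function.comp_apply, (hmemT i j₀).1 hj₀T] at this
      exact this.symm
    exact hii' (h2.symm.trans h1)
  -- counting
  set D : Finset (Σ _ : Fin n, Finset (Fin k)) :=
    univ.sigma (fun i => (T i).powerset \ {∅, T i}) with hD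
  set E : Finset (Finset (Fin m)) := univ.powerset \ {∅, (univ : Finset (Fin m))} with hE
  have hDmem : ∀ (i : Fin n) (A : Finset (Fin k)),
      (⟨i, A⟩ : Σ _ : Fin n, Finset (Fin k)) ∈ D ↔ (A ⊆ T i ∧ A ≠ ∅ ∧ A ≠ T i) := by
    intro i A
    simp [hD, Finset.mem_sigma, Finset.mem_sdiff, and_assoc]
  have hDcard : D.card = ∑ i : Fin n, (2 ^ (univ.filter (fun j => f j = i)).card - 2) := by
    rw [hD, Finset.card_sigma]
    refine Finset.sum_congr rfl (fun i _ => ?_)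
    have hsub : ({∅, T i} : Finset (Finset (Fin k))) ⊆ (T i).powerset := by
      intro s hs
      simp only [Finset.mem_insert, Finset.mem_singleton] at hs
      rcases hs with rfl | rfl
      · exact Finset.empty_mem_powerset _
      · exact Finset.mem_powerset_self _
    rw [Finset.card_sdiff_of_subset hsub, Finset.card_powerset,
      Finset.card_pair (Ne.symm (hTne i).ne_empty)]
  have hEcard : E.card = 2 ^ m - 2 := by
    have hne' : (∅ : Finset (Fin m)) ≠ univ := by
      intro h
      have : (⟨0, hm⟩ : Fin m) ∈ (∅ : Finset (Fin m)) := h ▸ Finset.mem_univ _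
      simp at this
    have hsub : ({∅, (univ : Finset (Fin m))} : Finset (Finset (Fin m))) ⊆ univ.powerset := by
      intro s hs
      exact Finset.mem_powerset.2 (Finset.subset_univ s)
    rw [hE, Finset.card_sdiff_of_subset hsub, Finset.card_powerset, Finset.card_pair hne',
      Finset.card_univ, Fintype.card_fin]
  have hle : D.card ≤ E.card := by
    apply Finset.card_le_card_of_injOn (fun p => p.2.biUnion C)
    · rintro ⟨i, A⟩ hp
      obtain ⟨hA, hAne, hAprop⟩ := (hDmem i A).1 hp
      have h1 : A.biUnion C ≠ ∅ := by
        obtain ⟨a, ha⟩ := Finset.nonempty_iff_ne_empty.2 hAne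
        obtain ⟨x, hx⟩ := hne a
        exact Finset.nonempty_iff_ne_empty.1 ⟨x, Finset.mem_biUnion.2 ⟨a, ha, hx⟩⟩
      have h2 : A.biUnion C ≠ univ := notuniv i A hA hAprop
      simp [hE, Finset.mem_sdiff, h1, h2]
    · rintro ⟨i, A⟩ hp ⟨i', A'⟩ hq heq
      obtain ⟨hA, hAne, hAprop⟩ := (hDmem i A).1 hp
      obtain ⟨hA', hAne', hAprop'⟩ := (hDmem i' A').1 hq
      simp only at heq
      by_cases hii : i = i'
      · subst hii
        have : A = A' := Finset.Subset.antisymm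
          (within i A A' hA hA' (le_of_eq heq))
          (within i A' A hA' hA (le_of_eq heq.symm))
        rw [this]
      · exact absurd heq (fun h =>
          cross i i' A A' hii hA hA' (Finset.nonempty_iff_ne_empty.2 hAne) hAprop h)
  calc ∑ i : Fin n, (2 ^ (Finset.univ.filter (fun j => f j = i)).card - 2)
      = D.card := hDcard.symm
    _ ≤ E.card := hle
    _ = 2 ^ m - 2 := hEcard
end

section
/- Let 2 ≤ k < m with m/(k-1) ≥ 2. Then P_k(m) ≥ 2^{⌊m/(k-1)⌋ - 1} - 1, i.e., there exists a multiset of non-empty proper subsets of [m], uniquely resolvable into N = 2^{⌊m/(k-1)⌋ - 1} - 1 classes, in which every class has exactly k components. -/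
open Finset

namespace S6

abbrev blk (q k x : ℕ) : ℕ := min (x / q) (k - 2)
abbrev posn (q k x : ℕ) : ℕ := x - q * blk q k x
abbrev inA (q k c x : ℕ) : Prop :=
  posn q k x = 0 ∨ (posn q k x < q ∧ Nat.testBit c (posn q k x - 1) = true)

def Cmp (q k m c t : ℕ) : Finset (Fin m) :=
  if t = 0 then Finset.univ.filter (fun x => inA q k c x.val)
  else Finset.univ.filter (fun x => blk q k x.val = t - 1 ∧ ¬ inA q k c x.val)

lemma mem_Cmp0 {q k m c : ℕ} {x : Fin m} : x ∈ Cmp q k m c 0 ↔ inA q k c x.val := by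
  simp [Cmp]

lemma mem_CmpS {q k m c s : ℕ} {x : Fin m} :
    x ∈ Cmp q k m c (s + 1) ↔ blk q k x.val = s ∧ ¬ inA q k c x.val := by
  simp [Cmp]

lemma blk_le (q k x : ℕ) : blk q k x ≤ k - 2 := min_le_right _ _

lemma blk_posn_eq {q k : ℕ} (hq : 0 < q) {s p : ℕ} (hs : s ≤ k - 2) (hp : p < q) :
    blk q k (q * s + p) = s ∧ posn q k (q * s + p) = p := by
  have hdiv : (q * s + p) / q = s := by
    rw [Nat.mul_add_div hq, Nat.div_eq_of_lt hp]
    omega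
  have hblk : blk q k (q * s + p) = s := by
    show min ((q * s + p) / q) (k - 2) = s
    rw [hdiv]; omega
  refine ⟨hblk, ?_⟩
  show q * s + p - q * blk q k (q * s + p) = p
  rw [hblk]; omega

lemma posn_zero (q k : ℕ) : posn q k 0 = 0 := by
  show 0 - q * blk q k 0 = 0
  omega

lemma inA_zero (q k c : ℕ) : inA q k c 0 := Or.inl (posn_zero q k)

lemma exists_unset_bit {q c : ℕ} (hq : 2 ≤ q) (hc : c < 2 ^ (q - 1) - 1) :
    ∃ p, p < q - 1 ∧ Nat.testBit c p = false := by
  by_contra h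
  push_neg at h
  have hall : ∀ p, p < q - 1 → Nat.testBit c p = true := by
    intro p hp
    have := h p hp
    cases hb : Nat.testBit c p with
    | false => exact absurd hb this
    | true => rfl
  have hmask : c &&& (2 ^ (q - 1) - 1) = 2 ^ (q - 1) - 1 := by
    apply Nat.eq_of_testBit_eq
    intro i
    rw [Nat.testBit_and, Nat.testBit_two_pow_sub_one]
    by_cases hi : i < q - 1
    · simp [hi, hall i hi]
    · simp [hi]
  have := Nat.and_le_left (n := c) (m := 2 ^ (q - 1) - 1)
  omega

lemma exists_not_inA {q k m c : ℕ} (hq : 2 ≤ q) (hqm : q * (k - 1) ≤ m)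
    (hc : c < 2 ^ (q - 1) - 1) {s : ℕ} (hs : s ≤ k - 2) (hk : 2 ≤ k) :
    ∃ x : ℕ, x < m ∧ blk q k x = s ∧ ¬ inA q k c x := by
  obtain ⟨p, hp, hbit⟩ := exists_unset_bit hq hc
  have hpq : p + 1 < q := by omega
  have hmul : q * (s + 1) ≤ q * (k - 1) := Nat.mul_le_mul_left q (by omega)
  have hmul2 : q * (s + 1) = q * s + q := by ring
  refine ⟨q * s + (p + 1), by omega, ?_, ?_⟩
  · exact (blk_posn_eq (by omega) hs hpq).1
  · have hpos := (blk_posn_eq (q := q) (k := k) (by omega) hs hpq).2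
    intro hA
    rcases hA with h0 | ⟨_, hb⟩
    · omega
    · rw [hpos] at hb
      simp at hb
      rw [hb] at hbit
      exact Bool.noConfusion hbit

lemma injA {q k m : ℕ} (hq : 2 ≤ q) (hk : 2 ≤ k) (hqm : q * (k - 1) ≤ m)
    {s : ℕ} (hs : s ≤ k - 2) {c c' : ℕ} (hc : c < 2 ^ (q - 1) - 1)
    (hc' : c' < 2 ^ (q - 1) - 1)
    (h : ∀ x, x < m → blk q k x = s → (inA q k c x ↔ inA q k c' x)) : c = c' := by
  apply Nat.eq_of_testBit_eq
  intro p
  by_cases hp : p < q - 1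
  · have hpq : p + 1 < q := by omega
    have hmul : q * (s + 1) ≤ q * (k - 1) := Nat.mul_le_mul_left q (by omega)
    have hmul2 : q * (s + 1) = q * s + q := by ring
    have hxm : q * s + (p + 1) < m := by omega
    obtain ⟨hblk, hpos⟩ := blk_posn_eq (q := q) (k := k) (by omega) hs hpq
    have hiff := h _ hxm hblk
    have key : ∀ d : ℕ, inA q k d (q * s + (p + 1)) ↔ Nat.testBit d p = true := by
      intro d
      constructor
      · rintro (h0 | ⟨_, hb⟩)
        · omega
        · rw [hpos] at hb; simpa using hb
      · intro hb
        exact Or.inr ⟨by omega, by rw [hpos]; simpa using hb⟩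
    rw [key, key] at hiff
    cases hb : Nat.testBit c p with
    | false =>
      cases hb' : Nat.testBit c' p with
      | false => rfl
      | true => rw [hb, hb'] at hiff; simp at hiff
    | true =>
      cases hb' : Nat.testBit c' p with
      | false => rw [hb, hb'] at hiff; simp at hiff
      | true => rfl
  · have h1 : c < 2 ^ p := lt_of_lt_of_le (show c < 2 ^ (q-1) by omega) (Nat.pow_le_pow_right (by norm_num) (by omega))
    have h2 : c' < 2 ^ p := lt_of_lt_of_le (show c' < 2 ^ (q-1) by omega) (Nat.pow_le_pow_right (by norm_num) (by omega))
    rw [Nat.testBit_lt_two_pow h1, Nat.testBit_lt_two_pow h2]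

theorem main (m k : ℕ) (hk : 2 ≤ k) (hkm : k < m) (h2 : 2 ≤ m / (k - 1)) :
    ∃ C : Fin (2 ^ (m / (k - 1) - 1) - 1) × Fin k → Finset (Fin m),
      UniquelyResolvable (2 ^ (m / (k - 1) - 1) - 1) C ∧ IsResolution C Prod.fst := by
  set q := m / (k - 1) with hqdef
  set N := 2 ^ (q - 1) - 1 with hNdef
  have hq2 : 2 ≤ q := h2
  have hqm : q * (k - 1) ≤ m := Nat.div_mul_le_self m (k - 1)
  have hN1 : 1 ≤ N := by
    have : (2 : ℕ) ^ 1 ≤ 2 ^ (q - 1) := Nat.pow_le_pow_right (by norm_num) (by omega)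
    omega
  have hm0 : 0 < m := by omega
  set C : Fin N × Fin k → Finset (Fin m) := fun j => Cmp q k m j.1.val j.2.val with hCdef
  have hres : IsResolution C Prod.fst := by
    intro i x
    by_cases hA : inA q k i.val x.val
    · refine ⟨(i, ⟨0, by omega⟩), ⟨rfl, mem_Cmp0.mpr hA⟩, ?_⟩
      rintro ⟨c', t'⟩ ⟨h1, h2'⟩
      obtain rfl : c' = i := h1
      obtain ⟨tv, htv⟩ := t'
      cases tv with
      | zero => rfl
      | succ s => exact absurd hA (mem_CmpS.mp h2').2
    · have hb : blk q k x.val + 1 < k := by have := blk_le q k x.val; omega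
      refine ⟨(i, ⟨blk q k x.val + 1, hb⟩), ⟨rfl, mem_CmpS.mpr ⟨rfl, hA⟩⟩, ?_⟩
      rintro ⟨c', t'⟩ ⟨h1, h2'⟩
      obtain rfl : c' = i := h1
      obtain ⟨tv, htv⟩ := t'
      cases tv with
      | zero => exact absurd (mem_Cmp0.mp h2') hA
      | succ s =>
        have hs : blk q k x.val = s := (mem_CmpS.mp h2').1
        subst hs
        rfl
  have hnon : ∀ j, (C j).Nonempty := by
    rintro ⟨c, t⟩
    obtain ⟨tv, htv⟩ := t
    cases tv with
    | zero => exact ⟨⟨0, hm0⟩, mem_Cmp0.mpr (inA_zero q k c.val)⟩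
    | succ s =>
      have hs : s ≤ k - 2 := by omega
      have hcN : c.val < 2 ^ (q - 1) - 1 := by simpa [hNdef] using c.isLt
      obtain ⟨x, hxm, hbx, hAx⟩ := exists_not_inA hq2 hqm hcN hs hk
      exact ⟨⟨x, hxm⟩, mem_CmpS.mpr ⟨hbx, hAx⟩⟩
  refine ⟨C, ⟨hnon, Prod.fst, hres, ?_⟩, hres⟩
  intro f' hf'
  have hx0C : ∀ c : Fin N, (⟨0, hm0⟩ : Fin m) ∈ C (c, ⟨0, by omega⟩) :=
    fun c => mem_Cmp0.mpr (inA_zero q k c.val)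
  set σf : Fin N → Fin N := fun c => f' (c, ⟨0, by omega⟩) with hσf
  have hσinj : Function.Injective σf := by
    intro c c' hcc
    obtain ⟨j0, hj0, hj0u⟩ := hf' (σf c) ⟨0, hm0⟩
    have e1 := hj0u (c, ⟨0, by omega⟩) ⟨rfl, hx0C c⟩
    have e2 := hj0u (c', ⟨0, by omega⟩) ⟨hcc.symm, hx0C c'⟩
    have := congrArg Prod.fst (e1.trans e2.symm)
    exact this
  have hσsurj : Function.Surjective σf := Finite.injective_iff_surjective.mp hσinj
  have key : ∀ (s : ℕ) (hsk : s + 1 < k) (c : Fin N), f' (c, ⟨s + 1, hsk⟩) = σf c := by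
    intro s hsk
    have hs2 : s ≤ k - 2 := by omega
    set φ : Fin N → Fin N := fun c => f' (c, ⟨s + 1, hsk⟩) with hφ
    have hφsurj : Function.Surjective φ := by
      intro i
      obtain ⟨c', hc'⟩ := hσsurj i
      have hc'N : c'.val < 2 ^ (q - 1) - 1 := by simpa [hNdef] using c'.isLt
      obtain ⟨x, hxm, hbx, hAx⟩ := exists_not_inA hq2 hqm hc'N hs2 hk
      obtain ⟨⟨c'', t''⟩, ⟨hj1, hj2⟩, hju⟩ := hf' i ⟨x, hxm⟩
      obtain ⟨tv, htv⟩ := t''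
      cases tv with
      | zero =>
        have hσc : σf c'' = i := hj1
        have : c'' = c' := hσinj (hσc.trans hc'.symm)
        subst this
        exact absurd (mem_Cmp0.mp hj2) hAx
      | succ u =>
        have h := mem_CmpS.mp hj2
        have hus : u = s := by rw [hbx] at h; exact h.1.symm
        subst hus
        exact ⟨c'', hj1⟩
    have hφinj : Function.Injective φ := Finite.injective_iff_surjective.mpr hφsurj
    intro c
    obtain ⟨c', hc'σ⟩ := hσsurj (φ c)
    have hcN : c.val < 2 ^ (q - 1) - 1 := by simpa [hNdef] using c.isLt
    have hc'N : c'.val < 2 ^ (q - 1) - 1 := by simpa [hNdef] using c'.isLt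
    have hcc : c.val = c'.val := by
      apply injA hq2 hk hqm hs2 hcN hc'N
      intro x hxm hbx
      constructor
      · intro hAc
        by_contra hAc'
        obtain ⟨j0, hj0, hj0u⟩ := hf' (φ c) ⟨x, hxm⟩
        cases j0 with
        | mk c'' t'' =>
          obtain ⟨tv, htv⟩ := t''
          cases tv with
          | zero =>
            have hσc : σf c'' = φ c := hj0.1
            have : c'' = c' := hσinj (hσc.trans hc'σ.symm)
            subst this
            exact absurd (mem_Cmp0.mp hj0.2) hAc'
          | succ u =>
            have h := mem_CmpS.mp hj0.2
            have hus : u = s := by rw [hbx] at h; exact h.1.symm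
            subst hus
            have hφc : φ c'' = φ c := hj0.1
            have : c'' = c := hφinj hφc
            subst this
            exact absurd hAc h.2
      · intro hAc'
        by_contra hAc
        obtain ⟨j0, hj0, hj0u⟩ := hf' (φ c) ⟨x, hxm⟩
        have e1 := hj0u (c', ⟨0, by omega⟩) ⟨hc'σ, mem_Cmp0.mpr hAc'⟩
        have e2 := hj0u (c, ⟨s + 1, hsk⟩) ⟨rfl, mem_CmpS.mpr ⟨hbx, hAc⟩⟩
        have := congrArg (fun j : Fin N × Fin k => (j.2 : Fin k).val) (e1.trans e2.symm)
        simp at this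
    have : c = c' := Fin.ext hcc
    subst this
    exact hc'σ.symm ▸ rfl
  refine ⟨Equiv.ofBijective σf ⟨hσinj, hσsurj⟩, ?_⟩
  funext j
  obtain ⟨c, t⟩ := j
  obtain ⟨tv, htv⟩ := t
  cases tv with
  | zero => rfl
  | succ s => exact key s htv c

theorem bound {m k N : ℕ} (hk : 2 ≤ k) (C : Fin N × Fin k → Finset (Fin m))
    (hUR : UniquelyResolvable N C) (hres : IsResolution C Prod.fst) :
    N ≤ Fintype.card (Fin k → Finset (Fin m)) := by
  obtain ⟨hne, f0, hf0, huq⟩ := hUR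
  have hinj : Function.Injective (fun i : Fin N => fun t : Fin k => C (i, t)) := by
    intro i1 i2 hEq
    by_contra hne12
    have hEq' : ∀ t : Fin k, C (i1, t) = C (i2, t) := fun t => congrFun hEq t
    set z : Fin k := ⟨0, by omega⟩ with hz
    set o : Fin k := ⟨1, by omega⟩ with ho
    set j1 : Fin N × Fin k := (i1, z) with hj1d
    set j2 : Fin N × Fin k := (i2, z) with hj2d
    set τ : Equiv.Perm (Fin N × Fin k) := Equiv.swap j1 j2 with hτ
    have hCτ : ∀ j, C (τ j) = C j := by
      intro j
      rcases eq_or_ne j j1 with rfl | h1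
      · rw [hτ, Equiv.swap_apply_left, hj1d, hj2d]
        exact (hEq' z).symm
      rcases eq_or_ne j j2 with rfl | hb2
      · rw [hτ, Equiv.swap_apply_right, hj1d, hj2d]
        exact hEq' z
      · rw [hτ, Equiv.swap_apply_of_ne_of_ne h1 hb2]
    have hττ : ∀ j, τ (τ j) = j := by
      intro j; rw [hτ]; exact Equiv.swap_apply_self _ _ _
    have hres' : IsResolution C (Prod.fst ∘ τ) := by
      intro i x
      obtain ⟨j0, ⟨ha, hb⟩, hu⟩ := hres i x
      refine ⟨τ j0, ⟨?_, by rw [hCτ]; exact hb⟩, ?_⟩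
      · show (τ (τ j0)).1 = i
        rw [hττ]; exact ha
      · rintro j' ⟨h1', h2'⟩
        have hj' : τ j' = j0 := hu (τ j') ⟨h1', by rw [hCτ]; exact h2'⟩
        have := congrArg τ hj'
        rwa [hττ] at this
    obtain ⟨σ1, hσ1⟩ := huq Prod.fst hres
    obtain ⟨σ2, hσ2⟩ := huq (Prod.fst ∘ τ) hres'
    set j3 : Fin N × Fin k := (i1, o) with hj3d
    have hτj3 : τ j3 = j3 := by
      rw [hτ]
      apply Equiv.swap_apply_of_ne_of_ne
      · rw [hj3d, hj1d]
        simp [hz, ho, Prod.ext_iff, Fin.ext_iff]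
      · rw [hj3d, hj2d]
        simp [hz, ho, Prod.ext_iff, Fin.ext_iff]
    have e1 : σ1 (f0 j1) = i1 := by
      have := congrFun hσ1 j1
      rw [hj1d] at this
      exact this.symm
    have e2 : σ1 (f0 j3) = i1 := by
      have := congrFun hσ1 j3
      rw [hj3d] at this
      exact this.symm
    have e3 : σ2 (f0 j1) = i2 := by
      have := congrFun hσ2 j1
      have hτj1 : τ j1 = j2 := by rw [hτ]; exact Equiv.swap_apply_left _ _
      rw [show (Prod.fst ∘ ⇑τ) j1 = (τ j1).1 from rfl, hτj1, hj2d] at this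
      exact this.symm
    have e4 : σ2 (f0 j3) = i1 := by
      have := congrFun hσ2 j3
      rw [show (Prod.fst ∘ ⇑τ) j3 = (τ j3).1 from rfl, hτj3, hj3d] at this
      exact this.symm
    have hf013 : f0 j1 = f0 j3 := σ1.injective (e1.trans e2.symm)
    rw [hf013, e4] at e3
    exact hne12 e3
  calc N = Fintype.card (Fin N) := (Fintype.card_fin N).symm
    _ ≤ _ := Fintype.card_le_of_injective _ hinj

end S6



/-- If `2 ≤ k < m` and `⌊m/(k-1)⌋ ≥ 2`, then `P k m ≥ 2 ^ (⌊m/(k-1)⌋ - 1) - 1`. -/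
theorem stmt6 (m k : ℕ) (hk : 2 ≤ k) (hkm : k < m) (h2 : 2 ≤ m / (k - 1)) :
    2 ^ (m / (k - 1) - 1) - 1 ≤ P k m := by
  have hmem : (2 ^ (m / (k - 1) - 1) - 1) ∈ {N | ∃ C : Fin N × Fin k → Finset (Fin m),
      UniquelyResolvable N C ∧ IsResolution C Prod.fst} := S6.main m k hk hkm h2
  have hbdd : BddAbove {N | ∃ C : Fin N × Fin k → Finset (Fin m),
      UniquelyResolvable N C ∧ IsResolution C Prod.fst} := by
    refine ⟨Fintype.card (Fin k → Finset (Fin m)), ?_⟩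
    rintro N ⟨C, h1, h2'⟩
    exact S6.bound hk C h1 h2'
  rw [P]
  exact le_csSup hbdd hmem
end

section
/- The function P_k(m) is non-increasing in k: for all 2 ≤ k < m, P_k(m) ≥ P_{k+1}(m). -/
open Finset

lemma res_perm {ι : Type*} {m n : ℕ} {C : ι → Finset (Fin m)} {f : ι → Fin n}
    (hUR : UniquelyResolvable n C) (hf : IsResolution C f)
    {f' : ι → Fin n} (hf' : IsResolution C f') : ∃ τ : Equiv.Perm (Fin n), f' = τ ∘ f := by
  obtain ⟨-, f₀, hf₀, hu⟩ := hUR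
  obtain ⟨σ, hσ⟩ := hu f' hf'
  obtain ⟨σ₀, hσ₀⟩ := hu f hf
  refine ⟨σ₀.symm.trans σ, funext fun x => ?_⟩
  have h1 : f' x = σ (f₀ x) := congrFun hσ x
  have h2 : f x = σ₀ (f₀ x) := congrFun hσ₀ x
  simp [h1, h2]

lemma res_hun {m k N : ℕ} {C : Fin N × Fin k → Finset (Fin m)}
    (hres : IsResolution C Prod.fst) :
    ∀ (c : Fin N) (x : Fin m) (t t' : Fin k), x ∈ C (c, t) → x ∈ C (c, t') → t = t' := by
  intro c x t t' h h'
  obtain ⟨j, -, hj⟩ := hres c x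
  have e1 : (c, t) = j := hj (c, t) ⟨rfl, h⟩
  have e2 : (c, t') = j := hj (c, t') ⟨rfl, h'⟩
  exact congrArg Prod.snd (e1.trans e2.symm)

lemma res_hex {m k N : ℕ} {C : Fin N × Fin k → Finset (Fin m)}
    (hres : IsResolution C Prod.fst) :
    ∀ (c : Fin N) (x : Fin m), ∃ t, x ∈ C (c, t) := by
  intro c x
  obtain ⟨⟨c₁, t⟩, ⟨h1, h2⟩, -⟩ := hres c x
  have h1' : c₁ = c := h1
  exact ⟨t, h1' ▸ h2⟩

lemma bound_lemma {m k N : ℕ} (hk : 2 ≤ k) (C : Fin N × Fin k → Finset (Fin m))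
    (hUR : UniquelyResolvable N C) (hres : IsResolution C Prod.fst) : N ≤ 2 ^ m := by
  have hinj : Function.Injective (fun i : Fin N => C (i, ⟨0, by omega⟩)) := by
    intro i i' hφ
    by_contra hne
    have hCC : C (i, ⟨0, by omega⟩) = C (i', ⟨0, by omega⟩) := hφ
    set z0 : Fin k := ⟨0, by omega⟩ with hz0
    set z1 : Fin k := ⟨1, by omega⟩ with hz1
    have hz01 : z1 ≠ z0 := by simp [hz0, hz1, Fin.ext_iff]
    set f' : Fin N × Fin k → Fin N :=
      fun p => if p = (i, z0) then i' else if p = (i', z0) then i else p.1 with hf'def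
    have hun := res_hun hres
    have hex := res_hex hres
    have hne' : i' ≠ i := Ne.symm hne
    have hresf' : IsResolution C f' := by
      intro a x
      obtain ⟨t, ht⟩ := hex a x
      by_cases hai : a = i
      · subst hai
        by_cases hx0 : x ∈ C (a, z0)
        · refine ⟨(i', z0), ⟨?_, hCC ▸ hx0⟩, ?_⟩
          · simp [hf'def, Prod.ext_iff, hne']
          · rintro ⟨b, s⟩ ⟨hfb, hxb⟩
            by_cases h1 : ((b, s) : Fin N × Fin k) = (a, z0)
            · have : i' = a := by simpa [hf'def, h1] using hfb
              exact absurd this hne'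
            · by_cases h2 : ((b, s) : Fin N × Fin k) = (i', z0)
              · exact h2
              · simp only [hf'def, if_neg h1, if_neg h2] at hfb
                have hb : b = a := hfb
                subst hb
                have : s = z0 := hun b x s z0 hxb hx0
                exact absurd (by rw [this]) h1
        · have htz : t ≠ z0 := fun h => hx0 (h ▸ ht)
          refine ⟨(a, t), ⟨?_, ht⟩, ?_⟩
          · simp [hf'def, Prod.ext_iff, htz, hne']
          · rintro ⟨b, s⟩ ⟨hfb, hxb⟩
            by_cases h1 : ((b, s) : Fin N × Fin k) = (a, z0)
            · have : i' = a := by simpa [hf'def, h1] using hfb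
              exact absurd this hne'
            · by_cases h2 : ((b, s) : Fin N × Fin k) = (i', z0)
              · exfalso
                have hb : b = i' := congrArg Prod.fst h2
                have hs : s = z0 := congrArg Prod.snd h2
                subst hb; subst hs
                exact hx0 (hCC ▸ hxb)
              · simp only [hf'def, if_neg h1, if_neg h2] at hfb
                have hb : b = a := hfb
                subst hb
                have : s = t := hun b x s t hxb ht
                rw [this]
      · by_cases hai' : a = i'
        · subst hai'
          by_cases hx0 : x ∈ C (a, z0)
          · have hx0' : x ∈ C (i, z0) := hCC ▸ hx0
            refine ⟨(i, z0), ⟨?_, hx0'⟩, ?_⟩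
            · simp [hf'def]
            · rintro ⟨b, s⟩ ⟨hfb, hxb⟩
              by_cases h1 : ((b, s) : Fin N × Fin k) = (i, z0)
              · exact h1
              · by_cases h2 : ((b, s) : Fin N × Fin k) = (a, z0)
                · have hne2 : ¬ a = i := fun h => hne h.symm
                  have : i = a := by simpa [hf'def, h1, h2, hne2] using hfb
                  exact absurd this hne
                · simp only [hf'def, if_neg h1, if_neg h2] at hfb
                  have hb : b = a := hfb
                  subst hb
                  have : s = z0 := hun b x s z0 hxb hx0
                  exact absurd (by rw [this]) h2
          · have htz : t ≠ z0 := fun h => hx0 (h ▸ ht)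
            refine ⟨(a, t), ⟨?_, ht⟩, ?_⟩
            · simp [hf'def, Prod.ext_iff, htz, hne]
            · rintro ⟨b, s⟩ ⟨hfb, hxb⟩
              by_cases h1 : ((b, s) : Fin N × Fin k) = (i, z0)
              · exfalso
                have hb : b = i := congrArg Prod.fst h1
                have hs : s = z0 := congrArg Prod.snd h1
                subst hb; subst hs
                exact hx0 (hCC ▸ hxb)
              · by_cases h2 : ((b, s) : Fin N × Fin k) = (a, z0)
                · have hne2 : ¬ a = i := fun h => hne h.symm
                  have : i = a := by simpa [hf'def, h1, h2, hne2] using hfb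
                  exact absurd this hne
                · simp only [hf'def, if_neg h1, if_neg h2] at hfb
                  have hb : b = a := hfb
                  subst hb
                  have : s = t := hun b x s t hxb ht
                  rw [this]
        · refine ⟨(a, t), ⟨?_, ht⟩, ?_⟩
          · simp [hf'def, Prod.ext_iff, hai, hai']
          · rintro ⟨b, s⟩ ⟨hfb, hxb⟩
            by_cases h1 : ((b, s) : Fin N × Fin k) = (i, z0)
            · have : i' = a := by simpa [hf'def, h1] using hfb
              exact absurd this.symm hai'
            · by_cases h2 : ((b, s) : Fin N × Fin k) = (i', z0)
              · exfalso
                rcases eq_or_ne i' i with hii | hii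
                · have : i' = a := by simpa [hf'def, h1, h2, hii] using hfb
                  exact hai' this.symm
                · have : i = a := by simpa [hf'def, h1, h2, hii] using hfb
                  exact hai this.symm
              · simp only [hf'def, if_neg h1, if_neg h2] at hfb
                have hb : b = a := hfb
                subst hb
                have : s = t := hun b x s t hxb ht
                rw [this]
    obtain ⟨τ, hτ⟩ := res_perm hUR hres hresf'
    have e1 : f' (i, z1) = τ i := congrFun hτ (i, z1)
    have e0 : f' (i, z0) = τ i := congrFun hτ (i, z0)
    have v1 : f' (i, z1) = i := by simp [hf'def, Prod.ext_iff, hz01, hne']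
    have v0 : f' (i, z0) = i' := by simp [hf'def]
    exact hne (by rw [← v1, e1, ← e0, v0])
  calc N = Fintype.card (Fin N) := (Fintype.card_fin N).symm
    _ ≤ Fintype.card (Finset (Fin m)) := Fintype.card_le_of_injective _ hinj
    _ = 2 ^ m := by simp [Fintype.card_finset]

lemma step_lemma {m k N : ℕ} (hk : 2 ≤ k)
    (C : Fin N × Fin (k + 1) → Finset (Fin m))
    (hUR : UniquelyResolvable N C) (hres : IsResolution C Prod.fst) :
    ∃ C' : Fin N × Fin k → Finset (Fin m),
      UniquelyResolvable N C' ∧ IsResolution C' Prod.fst := by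
  have hk0 : 0 < k := by omega
  set col : Fin (k + 1) → Fin k := fun t => ⟨min t.val (k - 1), by omega⟩ with hcol
  set emb : Fin k → Fin (k + 1) := fun j => ⟨j.val, by omega⟩ with hemb
  have colcast : ∀ j : Fin k, col (emb j) = j := by
    intro j
    apply Fin.ext
    have := j.isLt
    simp [hcol, hemb]
    omega
  set C' : Fin N × Fin k → Finset (Fin m) :=
    fun p => (Finset.univ.filter fun t => col t = p.2).biUnion fun t => C (p.1, t) with hC'
  have hmem : ∀ p x, x ∈ C' p ↔ ∃ t, col t = p.2 ∧ x ∈ C (p.1, t) := by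
    intro p x
    simp [hC', Finset.mem_biUnion, Finset.mem_filter]
  have hun := res_hun hres
  have hne : ∀ p, (C' p).Nonempty := by
    intro p
    obtain ⟨x, hx⟩ := hUR.1 (p.1, emb p.2)
    exact ⟨x, (hmem p x).2 ⟨emb p.2, colcast p.2, hx⟩⟩
  have hres' : IsResolution C' Prod.fst := by
    intro a x
    obtain ⟨⟨a₁, t⟩, ⟨h1, h2⟩, hu⟩ := hres a x
    have h1' : a₁ = a := h1
    subst h1'
    refine ⟨(a₁, col t), ⟨rfl, (hmem _ x).2 ⟨t, rfl, h2⟩⟩, ?_⟩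
    rintro ⟨b, s⟩ ⟨hb, hxb⟩
    have hb' : b = a₁ := hb
    subst hb'
    obtain ⟨t', hct', hxt'⟩ := (hmem (b, s) x).1 hxb
    have het : t' = t := by
      have := hu (b, t') ⟨rfl, hxt'⟩
      exact congrArg Prod.snd this
    have hst : s = col t := by rw [← het]; exact hct'.symm
    rw [hst]
  have hkey : ∀ f' : Fin N × Fin k → Fin N, IsResolution C' f' →
      ∃ τ : Equiv.Perm (Fin N), f' = τ ∘ Prod.fst := by
    intro f' hf'
    have hF' : IsResolution C (fun q => f' (q.1, col q.2)) := by
      intro a x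
      obtain ⟨⟨b, s⟩, ⟨hb, hxs⟩, hu'⟩ := hf' a x
      obtain ⟨t, hct, hxt⟩ := (hmem (b, s) x).1 hxs
      refine ⟨(b, t), ⟨by simpa [hct] using hb, hxt⟩, ?_⟩
      rintro ⟨b', t'⟩ ⟨hb', hxt'⟩
      have h2 : (b', col t') = (b, s) :=
        hu' (b', col t') ⟨hb', (hmem _ x).2 ⟨t', rfl, hxt'⟩⟩
      have hbb : b' = b := congrArg Prod.fst h2
      subst hbb
      have : t' = t := hun b' x t' t hxt' hxt
      rw [this]
    obtain ⟨τ, hτ⟩ := res_perm hUR hres hF'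
    refine ⟨τ, funext fun p => ?_⟩
    have h := congrFun hτ (p.1, emb p.2)
    simpa [colcast] using h
  exact ⟨C', ⟨hne, Prod.fst, hres', hkey⟩, hres'⟩


/-- `P k m` is non-increasing in `k`: for `2 ≤ k < m`, `P (k+1) m ≤ P k m`. -/
theorem stmt7 (m k : ℕ) (hk : 2 ≤ k) (hkm : k < m) : P (k + 1) m ≤ P k m := by
  have hsub : {N | ∃ C : Fin N × Fin (k + 1) → Finset (Fin m),
      UniquelyResolvable N C ∧ IsResolution C Prod.fst} ⊆
      {N | ∃ C : Fin N × Fin k → Finset (Fin m),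
      UniquelyResolvable N C ∧ IsResolution C Prod.fst} := by
    rintro N ⟨C, hUR, hres⟩
    obtain ⟨C', h1, h2⟩ := step_lemma hk C hUR hres
    exact ⟨C', h1, h2⟩
  have hbdd : BddAbove {N | ∃ C : Fin N × Fin k → Finset (Fin m),
      UniquelyResolvable N C ∧ IsResolution C Prod.fst} :=
    ⟨2 ^ m, fun N hN => by obtain ⟨C, hUR, hres⟩ := hN; exact bound_lemma hk C hUR hres⟩
  rcases Set.eq_empty_or_nonempty {N | ∃ C : Fin N × Fin (k + 1) → Finset (Fin m),
      UniquelyResolvable N C ∧ IsResolution C Prod.fst} with h | h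
  · unfold P
    rw [h]
    simp
  · exact csSup_le_csSup hbdd h hsub
end

section
/- Suppose 2 ≤ k < m, m/(k-1) ≥ 2, and n ≤ 2^{⌊m/(k-1)⌋ - 1} - 1. Then g(n,m) ≥ k·n. -/
open Finset

/-!
Put `a = k - 1` and `b = ⌊m / a⌋ - 1`, and give every point of `[m]` a position in a grid with
rows `Option (Fin b)` and columns `Fin a`, every cell being hit (possible as `(b + 1) a ≤ m`).
Label the `n` classes by distinct nonempty sets `W i ⊆ Fin b` (possible as `n ≤ 2 ^ b - 1`).
Class `i` has `a + 1` components: for each column `j`, the cells of column `j` outside the rows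
`W i`, and one more component made of the rows `W i`. In any resolution, a cell of row `none`
lies in the component of column `j` of every class, so these fall into distinct classes. A cell
in row `s ∈ W i`, column `j` then forces the class of component `(i, j)` to contain a row
component whose label contains `s`; comparing labels, that row component is the one of class
`i`, so each class of the new resolution is a class of the old one.
-/

open Function

section Resolution

variable {ι ι' : Type*} {m n : ℕ} {C : ι → Finset (Fin m)} {f : ι → Fin n}

theorem IsResolution.exists_mem (hf : IsResolution C f) (q : Fin n) (x : Fin m) :
    ∃ p, f p = q ∧ x ∈ C p :=
  (hf q x).exists

theorem IsResolution.eq_of_mem (hf : IsResolution C f) {x : Fin m} {p p' : ι}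
    (hpp' : f p = f p') (hp : x ∈ C p) (hp' : x ∈ C p') : p = p' :=
  (hf (f p) x).unique ⟨rfl, hp⟩ ⟨hpp'.symm, hp'⟩

theorem IsResolution.injective_comp {α : Type*} (hf : IsResolution C f) {e : α → ι}
    (he : Injective e) {x : Fin m} (hx : ∀ a, x ∈ C (e a)) : Injective (f ∘ e) :=
  fun _ _ h => he (hf.eq_of_mem h (hx _) (hx _))

theorem IsResolution.comp_equiv (hf : IsResolution C f) (e : ι' ≃ ι) :
    IsResolution (C ∘ e) (f ∘ e) := by
  intro q x
  obtain ⟨p, hp, hu⟩ := hf q x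
  exact ⟨e.symm p, by simpa using hp, fun p' hp' => by simp [← hu (e p') hp']⟩

theorem IsResolution.card_le [Fintype ι] (hf : IsResolution C f) (hne : ∀ p, (C p).Nonempty) :
    Fintype.card ι ≤ n * m := by
  have hinj : Injective fun p => (f p, (C p).min' (hne p)) := by
    intro p p' h
    simp only [Prod.mk.injEq] at h
    exact hf.eq_of_mem h.1 ((C p).min'_mem _) (h.2 ▸ (C p').min'_mem _)
  simpa using Fintype.card_le_of_injective _ hinj

theorem UniquelyResolvable.comp_equiv (h : UniquelyResolvable n C) (e : ι' ≃ ι) :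
    UniquelyResolvable n (C ∘ e) := by
  obtain ⟨hne, f, hf, hu⟩ := h
  refine ⟨fun p => hne (e p), f ∘ e, hf.comp_equiv e, fun f' hf' => ?_⟩
  obtain ⟨σ, hσ⟩ := hu (f' ∘ e.symm) (by simpa [comp_assoc] using hf'.comp_equiv e.symm)
  exact ⟨σ, by rw [← comp_assoc, ← hσ]; ext; simp⟩

theorem bddAbove_uniquelyResolvable (n m : ℕ) :
    BddAbove {k | ∃ C : Fin k → Finset (Fin m), UniquelyResolvable n C} :=
  ⟨n * m, fun k ⟨_, hne, _, hf, _⟩ => by simpa using hf.card_le hne⟩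

theorem UniquelyResolvable.card_le_g [Fintype ι] (h : UniquelyResolvable n C) :
    Fintype.card ι ≤ g n m :=
  le_csSup (bddAbove_uniquelyResolvable n m)
    ⟨C ∘ (Fintype.equivFin ι).symm, h.comp_equiv _⟩

end Resolution

section Fibres

variable {ι κ : Type*} {m : ℕ}

open Classical in
noncomputable def fibres (σ : ι → Fin m → κ) (p : ι × κ) : Finset (Fin m) :=
  univ.filter fun x => σ p.1 x = p.2

@[simp]
theorem mem_fibres {σ : ι → Fin m → κ} {p : ι × κ} {x : Fin m} :
    x ∈ fibres σ p ↔ σ p.1 x = p.2 := by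
  simp [fibres]

theorem isResolution_fibres {n : ℕ} (σ : Fin n → Fin m → κ) :
    IsResolution (fibres σ) Prod.fst := fun i x =>
  ⟨(i, σ i x), ⟨rfl, mem_fibres.2 rfl⟩, fun _ ⟨hp, hx⟩ => Prod.ext hp (hp ▸ mem_fibres.1 hx).symm⟩

end Fibres

section Grid

variable {m n : ℕ} {β κ : Type*}

open Classical in
noncomputable def slot (W : Fin n → Set β) (d : Fin m → β × κ) (i : Fin n) (x : Fin m) :
    Option κ :=
  if (d x).1 ∈ W i then none else some (d x).2

variable {W : Fin n → Set β} {d : Fin m → β × κ}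

theorem slot_of_mem {i : Fin n} {x : Fin m} {s : β} {j : κ} (hx : d x = (s, j))
    (hs : s ∈ W i) : slot W d i x = none := by
  simp [slot, hx, hs]

theorem slot_of_notMem {i : Fin n} {x : Fin m} {s : β} {j : κ} (hx : d x = (s, j))
    (hs : s ∉ W i) : slot W d i x = some j := by
  simp [slot, hx, hs]

variable {β₀ : β} {f : Fin n × Option κ → Fin n}

theorem injective_apply_some (hd : Surjective d) (hβ₀ : ∀ i, β₀ ∉ W i)
    (hf : IsResolution (fibres (slot W d)) f) (j : κ) : Injective fun i => f (i, some j) := by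
  obtain ⟨x, hx⟩ := hd (β₀, j)
  exact hf.injective_comp (e := fun i => (i, some j)) (fun _ _ h => (Prod.mk.inj h).1)
    fun i => mem_fibres.2 (slot_of_notMem hx (hβ₀ i))

theorem exists_apply_none_eq (hd : Surjective d) (hβ₀ : ∀ i, β₀ ∉ W i)
    (hf : IsResolution (fibres (slot W d)) f) {i : Fin n} {s : β} (hs : s ∈ W i) (j : κ) :
    ∃ c, f (c, none) = f (i, some j) ∧ s ∈ W c := by
  obtain ⟨x, hx⟩ := hd (s, j)
  obtain ⟨⟨c, o⟩, hco, hxc⟩ := hf.exists_mem (f (i, some j)) x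
  by_cases hsc : s ∈ W c
  · rw [mem_fibres, slot_of_mem hx hsc] at hxc
    exact ⟨c, hxc ▸ hco, hsc⟩
  · rw [mem_fibres, slot_of_notMem hx hsc] at hxc
    subst hxc
    exact absurd (injective_apply_some hd hβ₀ hf j hco ▸ hs) hsc

theorem bijective_apply_none [Nonempty κ] (hd : Surjective d) (hβ₀ : ∀ i, β₀ ∉ W i)
    (hWne : ∀ i, (W i).Nonempty) (hf : IsResolution (fibres (slot W d)) f) :
    Bijective fun i => f (i, none) := by
  refine Finite.surjective_iff_bijective.1 fun q => ?_
  obtain ⟨i, rfl⟩ := Finite.injective_iff_surjective.1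
    (injective_apply_some hd hβ₀ hf (Classical.arbitrary κ)) q
  obtain ⟨s, hs⟩ := hWne i
  obtain ⟨c, hc, -⟩ := exists_apply_none_eq hd hβ₀ hf hs _
  exact ⟨c, hc⟩

theorem eq_of_apply_none_eq [Nonempty κ] (hd : Surjective d) (hW : Injective W)
    (hβ₀ : ∀ i, β₀ ∉ W i) (hWne : ∀ i, (W i).Nonempty) (hf : IsResolution (fibres (slot W d)) f)
    {c i : Fin n} {j : κ} (h : f (c, none) = f (i, some j)) : c = i := by
  refine hW (Set.ext fun s => ⟨fun hsc => ?_, fun hsi => ?_⟩)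
  · by_contra hsi
    obtain ⟨x, hx⟩ := hd (s, j)
    have := hf.eq_of_mem h (mem_fibres.2 (slot_of_mem hx hsc))
      (mem_fibres.2 (slot_of_notMem hx hsi))
    simp at this
  · obtain ⟨c', hc', hsc'⟩ := exists_apply_none_eq hd hβ₀ hf hsi j
    exact (bijective_apply_none hd hβ₀ hWne hf).1 (hc'.trans h.symm) ▸ hsc'

theorem uniquelyResolvable_fibres_slot [Nonempty κ] (hd : Surjective d) (hW : Injective W)
    (hβ₀ : ∀ i, β₀ ∉ W i) (hWne : ∀ i, (W i).Nonempty) :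
    UniquelyResolvable n (fibres (slot W d)) := by
  refine ⟨?_, Prod.fst, isResolution_fibres _, fun f hf =>
    ⟨Equiv.ofBijective _ (bijective_apply_none hd hβ₀ hWne hf), funext fun ⟨i, o⟩ => ?_⟩⟩
  · rintro ⟨i, _ | j⟩
    · obtain ⟨s, hs⟩ := hWne i
      obtain ⟨x, hx⟩ := hd (s, Classical.arbitrary κ)
      exact ⟨x, mem_fibres.2 (slot_of_mem hx hs)⟩
    · obtain ⟨x, hx⟩ := hd (β₀, j)
      exact ⟨x, mem_fibres.2 (slot_of_notMem hx (hβ₀ i))⟩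
  · cases o with
    | none => rfl
    | some j =>
      obtain ⟨c, hc⟩ := (bijective_apply_none hd hβ₀ hWne hf).2 (f (i, some j))
      obtain rfl := eq_of_apply_none_eq hd hW hβ₀ hWne hf hc
      exact hc.symm

end Grid

theorem exists_injective_nonempty_sets {α : Type*} [Fintype α] {n : ℕ}
    (hn : n ≤ 2 ^ Fintype.card α - 1) : ∃ W : Fin n → Set α, Injective W ∧ ∀ i, (W i).Nonempty := by
  classical
  obtain ⟨e⟩ := Embedding.nonempty_of_card_le (α := Fin n) (β := {s : Set α // s ≠ ∅})
    (by rw [Fintype.card_subtype_compl, Fintype.card_set, Fintype.card_subtype_eq]; simpa)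
  exact ⟨fun i => e i, fun _ _ h => e.injective (Subtype.ext h),
    fun i => Set.nonempty_iff_ne_empty.2 (e i).2⟩

theorem exists_surjective_of_card_le {α : Type*} [Fintype α] [Nonempty α] {m : ℕ}
    (h : Fintype.card α ≤ m) : ∃ d : Fin m → α, Surjective d :=
  let ⟨e⟩ := Embedding.nonempty_of_card_le (β := Fin m) (by simpa using h)
  ⟨invFun e, invFun_surjective e.injective⟩

theorem mul_succ_le_g {a b m n : ℕ} (ha : 0 < a) (hm : (b + 1) * a ≤ m) (hn : n ≤ 2 ^ b - 1) :
    n * (a + 1) ≤ g n m := by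
  have : Nonempty (Fin a) := ⟨⟨0, ha⟩⟩
  obtain ⟨W, hW, hWne⟩ := exists_injective_nonempty_sets (α := Fin b) (by simpa using hn)
  obtain ⟨d, hd⟩ := exists_surjective_of_card_le (α := Option (Fin b) × Fin a) (by simpa using hm)
  have hUR := uniquelyResolvable_fibres_slot (W := fun i => Option.some '' W i) (β₀ := none) hd
    ((Set.image_injective.2 (Option.some_injective _)).comp hW) (by simp) fun i => (hWne i).image _
  simpa using hUR.card_le_g

theorem stmt8_general (m k n : ℕ) (hk : 2 ≤ k) (h2 : 2 ≤ m / (k - 1))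
    (hn : n ≤ 2 ^ (m / (k - 1) - 1) - 1) :
    k * n ≤ g n m := by
  obtain ⟨a, rfl⟩ : ∃ a, k = a + 1 := ⟨k - 1, by omega⟩
  rw [Nat.add_sub_cancel] at h2 hn
  have hm : (m / a - 1 + 1) * a ≤ m := by
    rw [Nat.sub_add_cancel (by omega)]
    exact Nat.div_mul_le_self m a
  simpa [mul_comm] using mul_succ_le_g (by omega) hm hn

/-- If `2 ≤ k < m`, `⌊m/(k-1)⌋ ≥ 2` and `n ≤ 2 ^ (⌊m/(k-1)⌋ - 1) - 1`, then
`g n m ≥ k * n`. -/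
theorem stmt8 (m k n : ℕ) (hk : 2 ≤ k) (hkm : k < m) (h2 : 2 ≤ m / (k - 1))
    (hn : n ≤ 2 ^ (m / (k - 1) - 1) - 1) :
    k * n ≤ g n m :=
  stmt8_general m k n hk h2 hn
end

section
/- Suppose 1 ≤ n ≤ 2^{m-1} - 1. Then g(n,m) > n(m+1)/(log_2(n+1) + 2). -/
open Finset

/-!
Put `s = ⌈log₂ (n + 1)⌉`, label the classes by the distinct nonzero codes `c + 1 < 2 ^ s`, and cut
`[m]` into `K + 1 = ⌊m / (s + 1)⌋` blocks of `s + 1` points. Class `c` has `K + 2` parts: part `r`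
consists of the points of block `r` at the 1-bits of `c + 1` and the points of block `r - 1` at its
0-bits, the last part also taking the points beyond the blocks. Offset `s` is a 0-bit of every
code, so it lies in part `r + 1` of every class and any resolution has exactly one part `r + 1` in
each class; counting gives the same for parts `0`. Propagating block by block, every resolution is
the given one up to renaming, so `g n m ≥ n (K + 2) ≥ n (m + 1) / (s + 1)`, and
`s + 1 < log₂ (n + 1) + 2`.
-/

open Function

namespace IsResolution

variable {ι κ : Type*} {m n : ℕ} {C : ι → Finset (Fin m)} {f : ι → Fin n}

theorem comp_equiv_s9 (hf : IsResolution C f) (e : κ ≃ ι) : IsResolution (C ∘ e) (f ∘ e) :=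
  fun i x => (e.existsUnique_congr fun _ => Iff.rfl).mpr (hf i x)

theorem card_le_s9 [Fintype ι] (hC : ∀ j, (C j).Nonempty) (hf : IsResolution C f) :
    Fintype.card ι ≤ n * m := by
  have hinj : Injective fun j => (f j, (C j).min' (hC j)) := by
    intro j₁ j₂ h
    simp only [Prod.mk.injEq] at h
    exact (hf (f j₁) _).unique ⟨rfl, min'_mem _ _⟩ ⟨h.1.symm, h.2.symm ▸ min'_mem _ _⟩
  simpa using Fintype.card_le_of_injective _ hinj

theorem bijective_comp (hf : IsResolution C f) {e : κ → ι} (he : Injective e) {x : Fin m}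
    (hx : ∀ j, x ∈ C j ↔ j ∈ Set.range e) : Bijective (f ∘ e) := by
  refine ⟨fun k₁ k₂ h => he ((hf _ x).unique ⟨rfl, (hx _).2 ⟨k₁, rfl⟩⟩
    ⟨h.symm, (hx _).2 ⟨k₂, rfl⟩⟩), fun i => ?_⟩
  obtain ⟨j, ⟨hji, hxj⟩, -⟩ := hf i x
  obtain ⟨k, rfl⟩ := (hx j).1 hxj
  exact ⟨k, hji⟩

theorem mem_iff_notMem (hf : IsResolution C f) {j₁ j₂ : ι} (hne : j₁ ≠ j₂) (h : f j₁ = f j₂)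
    {x : Fin m} (hx : ∀ j, f j = f j₁ → x ∈ C j → j = j₁ ∨ j = j₂) : x ∈ C j₁ ↔ x ∉ C j₂ := by
  obtain ⟨j, ⟨hj, hxj⟩, huniq⟩ := hf (f j₁) x
  constructor
  · exact fun h₁ h₂ => hne ((huniq j₁ ⟨rfl, h₁⟩).trans (huniq j₂ ⟨h.symm, h₂⟩).symm)
  · intro h₂
    rcases hx j hj hxj with rfl | rfl
    exacts [hxj, absurd hxj h₂]

end IsResolution

namespace UniquelyResolvable

variable {ι κ : Type*} {m n : ℕ} {C : ι → Finset (Fin m)}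

theorem comp_equiv_s9 (h : UniquelyResolvable n C) (e : κ ≃ ι) : UniquelyResolvable n (C ∘ e) := by
  obtain ⟨hC, f, hf, huniq⟩ := h
  refine ⟨fun j => hC (e j), f ∘ e, hf.comp_equiv_s9 e, fun f' hf' => ?_⟩
  obtain ⟨σ, hσ⟩ := huniq (f' ∘ e.symm) (by simpa [comp_assoc] using hf'.comp_equiv_s9 e.symm)
  exact ⟨σ, by rw [← comp_assoc, ← hσ]; ext1 j; simp⟩

theorem card_le_g_s9 [Fintype ι] (h : UniquelyResolvable n C) : Fintype.card ι ≤ g n m := by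
  have hbdd : BddAbove {k | ∃ C : Fin k → Finset (Fin m), UniquelyResolvable n C} :=
    ⟨n * m, fun k ⟨C, hC, _, hf, _⟩ => by simpa using hf.card_le_s9 hC⟩
  exact le_csSup hbdd ⟨_, h.comp_equiv_s9 (Fintype.equivFin ι).symm⟩

end UniquelyResolvable

theorem Nat.exists_testBit_of_ne_zero_of_lt {x s : ℕ} (h0 : x ≠ 0) (hx : x < 2 ^ s) :
    ∃ b < s, x.testBit b = true := by
  obtain ⟨b, hb⟩ := Nat.exists_testBit_of_ne_zero h0
  exact ⟨b, (Nat.pow_lt_pow_iff_right one_lt_two).1 ((Nat.ge_two_pow_of_testBit hb).trans_lt hx),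
    hb⟩

theorem Nat.eq_of_testBit_eq_of_lt {x y s : ℕ} (hx : x < 2 ^ s) (hy : y < 2 ^ s)
    (h : ∀ b < s, x.testBit b = y.testBit b) : x = y := by
  refine Nat.eq_of_testBit_eq fun b => ?_
  by_cases hb : b < s
  · exact h b hb
  · have hsb : 2 ^ s ≤ 2 ^ b := Nat.pow_le_pow_right two_pos (not_lt.1 hb)
    rw [Nat.testBit_lt_two_pow (hx.trans_le hsb), Nat.testBit_lt_two_pow (hy.trans_le hsb)]

namespace BlockCode

variable {n m s K : ℕ}

def part (s K c x : ℕ) : Fin (K + 2) :=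
  ⟨min (x / (s + 1) + if (c + 1).testBit (x % (s + 1)) then 0 else 1) (K + 1), by omega⟩

def family (n m s K : ℕ) (j : Fin n × Fin (K + 2)) : Finset (Fin m) :=
  {x | part s K j.1 x = j.2}

theorem mem_family {j : Fin n × Fin (K + 2)} {x : Fin m} :
    x ∈ family n m s K j ↔ part s K j.1 x = j.2 := by
  simp [family]

theorem part_of_eq {c x b : ℕ} {r : Fin (K + 1)} (hx : x = r * (s + 1) + b) (hb : b ≤ s) :
    part s K c x = if (c + 1).testBit b then r.castSucc else r.succ := by
  have hdiv : x / (s + 1) = r := by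
    rw [hx, add_comm, Nat.add_mul_div_right _ _ s.succ_pos, Nat.div_eq_of_lt (by omega), zero_add]
  have hmod : x % (s + 1) = b := by
    rw [hx, add_comm, Nat.add_mul_mod_self_right, Nat.mod_eq_of_lt (by omega)]
  have hr := r.isLt
  ext
  simp only [part, hdiv, hmod]
  split_ifs <;> simp only [Fin.val_castSucc, Fin.val_succ] <;> omega

theorem exists_point (hm : (K + 1) * (s + 1) ≤ m) (r : Fin (K + 1)) {b : ℕ} (hb : b ≤ s) :
    ∃ x : Fin m, (x : ℕ) = r * (s + 1) + b :=
  ⟨⟨r * (s + 1) + b, by nlinarith [r.isLt]⟩, rfl⟩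

theorem mem_family_of_eq {c : Fin n} {t : Fin (K + 2)} {x : Fin m} {r : Fin (K + 1)} {b : ℕ}
    (hx : (x : ℕ) = r * (s + 1) + b) (hb : b ≤ s) :
    x ∈ family n m s K (c, t) ↔ t = if (c + 1 : ℕ).testBit b then r.castSucc else r.succ := by
  rw [mem_family, part_of_eq hx hb, eq_comm]

theorem testBit_code (hcode : n + 1 ≤ 2 ^ s) (c : Fin n) : (c + 1 : ℕ).testBit s = false :=
  Nat.testBit_lt_two_pow (by omega)

theorem family_nonempty (hcode : n + 1 ≤ 2 ^ s) (hm : (K + 1) * (s + 1) ≤ m)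
    (j : Fin n × Fin (K + 2)) : (family n m s K j).Nonempty := by
  obtain ⟨c, t⟩ := j
  cases t using Fin.cases with
  | zero =>
    obtain ⟨b, hbs, hbit⟩ :=
      Nat.exists_testBit_of_ne_zero_of_lt (x := c + 1) (s := s) (by omega) (by omega)
    obtain ⟨x, hx⟩ := exists_point hm 0 hbs.le
    exact ⟨x, by simp [mem_family_of_eq hx hbs.le, hbit]⟩
  | succ r =>
    obtain ⟨x, hx⟩ := exists_point hm r le_rfl
    exact ⟨x, by simp [mem_family_of_eq hx le_rfl, testBit_code hcode]⟩

theorem isResolution_family : IsResolution (family n m s K) Prod.fst := fun i x =>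
  ⟨(i, part s K i x), ⟨rfl, mem_family.2 rfl⟩, fun _ ⟨hi, hx⟩ => by
    subst hi; exact Prod.ext rfl (mem_family.1 hx).symm⟩

section Uniqueness

variable {f : Fin n × Fin (K + 2) → Fin n}

theorem bijective_succ (hcode : n + 1 ≤ 2 ^ s) (hm : (K + 1) * (s + 1) ≤ m)
    (hf : IsResolution (family n m s K) f) (r : Fin (K + 1)) :
    Bijective fun c => f (c, r.succ) := by
  obtain ⟨x, hx⟩ := exists_point hm r le_rfl
  refine hf.bijective_comp (e := fun c => (c, r.succ)) (x := x)
    (fun _ _ h => (Prod.ext_iff.1 h).1) fun ⟨c, t⟩ => ?_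
  simp [mem_family_of_eq hx le_rfl, testBit_code hcode, eq_comm]

theorem surjective_zero (hcode : n + 1 ≤ 2 ^ s) (hm : (K + 1) * (s + 1) ≤ m)
    (hf : IsResolution (family n m s K) f) : Surjective fun c => f (c, 0) := by
  intro i
  obtain ⟨d, hd⟩ := (bijective_succ hcode hm hf 0).2 i
  obtain ⟨b, hbs, hbit⟩ := Nat.exists_testBit_of_ne_zero_of_lt (x := d + 1) (s := s)
    (by omega) (by omega)
  obtain ⟨x, hx⟩ := exists_point hm 0 hbs.le
  obtain ⟨⟨e, t⟩, ⟨hei, hxe⟩, -⟩ := hf i x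
  rw [mem_family_of_eq hx hbs.le] at hxe
  split_ifs at hxe with he <;> subst hxe
  · exact ⟨e, hei⟩
  · have hed : e = d := (bijective_succ hcode hm hf 0).1 (hei.trans hd.symm)
    exact absurd (hed ▸ hbit) he

/-- In block `r`, the part `r` and the part `r + 1` lying in one resolution class complement each
other, which forces their codes to agree bit by bit. -/
theorem apply_castSucc_eq_apply_succ (hcode : n + 1 ≤ 2 ^ s) (hm : (K + 1) * (s + 1) ≤ m)
    (hf : IsResolution (family n m s K) f) (r : Fin (K + 1))
    (hinj : Injective fun c => f (c, r.castSucc)) (c : Fin n) :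
    f (c, r.castSucc) = f (c, r.succ) := by
  have hsucc := bijective_succ hcode hm hf r
  obtain ⟨d, hd⟩ := hsucc.2 (f (c, r.castSucc))
  suffices hcd : c = d by rw [hcd] at hd ⊢; exact hd.symm
  have hbits : ∀ b < s, (c + 1 : ℕ).testBit b = (d + 1 : ℕ).testBit b := by
    intro b hb
    obtain ⟨x, hx⟩ := exists_point hm r hb.le
    have key := hf.mem_iff_notMem (j₁ := (c, r.castSucc)) (j₂ := (d, r.succ))
      (by simp [Fin.ext_iff]) hd.symm (x := x) fun ⟨e, t⟩ he hxe => by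
        rw [mem_family_of_eq hx hb.le] at hxe
        split_ifs at hxe <;> subst hxe
        · exact .inl (by rw [hinj he])
        · exact .inr (by rw [hsucc.1 (he.trans hd.symm)])
    rw [mem_family_of_eq hx hb.le, mem_family_of_eq hx hb.le] at key
    simpa [Fin.ext_iff] using key
  exact Fin.ext (by have := Nat.eq_of_testBit_eq_of_lt (by omega) (by omega) hbits; omega)

theorem eq_comp_fst (hcode : n + 1 ≤ 2 ^ s) (hm : (K + 1) * (s + 1) ≤ m)
    (hf : IsResolution (family n m s K) f) : ∃ σ : Equiv.Perm (Fin n), f = σ ∘ Prod.fst := by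
  have hzero := surjective_zero hcode hm hf
  have hinj : ∀ t, Injective fun c => f (c, t) :=
    Fin.cases (Finite.injective_iff_surjective.2 hzero) fun r => (bijective_succ hcode hm hf r).1
  have hconst : ∀ t c, f (c, t) = f (c, 0) := by
    intro t c
    induction t using Fin.induction with
    | zero => rfl
    | succ r ih => rw [← apply_castSucc_eq_apply_succ hcode hm hf r (hinj _), ih]
  exact ⟨Equiv.ofBijective _ ⟨hinj 0, hzero⟩, funext fun ⟨c, t⟩ => hconst t c⟩

end Uniqueness

theorem uniquelyResolvable_family (hcode : n + 1 ≤ 2 ^ s) (hm : (K + 1) * (s + 1) ≤ m) :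
    UniquelyResolvable n (family n m s K) :=
  ⟨family_nonempty hcode hm, Prod.fst, isResolution_family, fun _ => eq_comp_fst hcode hm⟩

end BlockCode

theorem mul_add_two_le_g {n m s K : ℕ} (hcode : n + 1 ≤ 2 ^ s) (hm : (K + 1) * (s + 1) ≤ m) :
    n * (K + 2) ≤ g n m := by
  simpa using (BlockCode.uniquelyResolvable_family hcode hm).card_le_g_s9

theorem mul_div_add_one_le_g {n m s : ℕ} (hcode : n + 1 ≤ 2 ^ s) (hsm : s + 1 ≤ m) :
    n * (m / (s + 1) + 1) ≤ g n m := by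
  obtain ⟨K, hK⟩ := Nat.exists_eq_add_one_of_ne_zero (Nat.div_pos hsm s.succ_pos).ne'
  rw [hK]
  exact mul_add_two_le_g hcode (hK ▸ Nat.div_mul_le_self m (s + 1))

theorem Nat.clog_lt_logb_add_one (b x : ℕ) : (Nat.clog b x : ℝ) < Real.logb b x + 1 := by
  rw [← Real.natCeil_logb_natCast]
  exact Nat.ceil_lt_add_one (div_nonneg (Real.log_natCast_nonneg x) (Real.log_natCast_nonneg b))

/-- Lower bound: if `1 ≤ n ≤ 2 ^ (m-1) - 1`, then
`g n m > n (m+1) / (log₂(n+1) + 2)`. -/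
theorem stmt9 (m n : ℕ) (hn : 1 ≤ n) (h : n ≤ 2 ^ (m - 1) - 1) :
    ((n : ℝ) * (m + 1)) / (Real.logb 2 (n + 1) + 2) < (g n m : ℝ) := by
  set s := Nat.clog 2 (n + 1)
  have hcode : n + 1 ≤ 2 ^ s := Nat.le_pow_clog one_lt_two _
  have hsm : s + 1 ≤ m := by
    have : s ≤ m - 1 := Nat.clog_le_of_le_pow (by have := Nat.one_le_two_pow (n := m - 1); omega)
    have : m ≠ 0 := by rintro rfl; simp at h; omega
    omega
  have hg : (n * (m / (s + 1) + 1) : ℕ) ≤ (g n m : ℝ) := mod_cast mul_div_add_one_le_g hcode hsm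
  have hlog : (s : ℝ) + 1 < Real.logb 2 (n + 1) + 2 := by
    have := Nat.clog_lt_logb_add_one 2 (n + 1); push_cast at this; linarith
  have hm : (m : ℝ) + 1 ≤ (m / (s + 1) + 1 : ℕ) * (s + 1) := by
    have : m < (m / (s + 1) + 1) * (s + 1) := by
      rw [add_one_mul]; exact Nat.lt_div_mul_add s.succ_pos
    exact_mod_cast this
  have hnk : (0 : ℝ) < (n * (m / (s + 1) + 1) : ℕ) := mod_cast Nat.mul_pos hn (Nat.succ_pos _)
  rw [div_lt_iff₀ (by linarith [(s.cast_nonneg : (0 : ℝ) ≤ s)])]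
  calc (n : ℝ) * (m + 1) ≤ n * ((m / (s + 1) + 1 : ℕ) * (s + 1)) := by gcongr
    _ = (n * (m / (s + 1) + 1) : ℕ) * ((s : ℝ) + 1) := by push_cast; ring
    _ < (n * (m / (s + 1) + 1) : ℕ) * (Real.logb 2 (n + 1) + 2) := by gcongr
    _ ≤ g n m * (Real.logb 2 (n + 1) + 2) := by gcongr; linarith
end

section
/- For any m and 3 ≤ k ≤ m/2, P_k(m) ≤ 2^{m·H_2(1/k)}. -/
open Finset

lemma exists_small {m k N : ℕ} (hk : 0 < k) {C : Fin N × Fin k → Finset (Fin m)}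
    (hres : IsResolution C Prod.fst) (i : Fin N) :
    ∃ j : Fin k, (C (i, j)).card ≤ m / k := by
  by_contra h
  push_neg at h
  have hdisj : ∀ j ∈ (univ : Finset (Fin k)), ∀ j' ∈ univ, j ≠ j' →
      Disjoint (C (i, j)) (C (i, j')) := by
    intro j _ j' _ hjj
    rw [Finset.disjoint_left]
    intro x hx hx'
    obtain ⟨p, hp, hup⟩ := hres i x
    have h1 : (i, j) = p := hup (i, j) ⟨rfl, hx⟩
    have h2 : (i, j') = p := hup (i, j') ⟨rfl, hx'⟩
    apply hjj
    have := h1.trans h2.symm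
    exact congrArg Prod.snd this
  have hsum : ∑ j : Fin k, (C (i, j)).card
      = ((univ : Finset (Fin k)).biUnion (fun j => C (i, j))).card :=
    (Finset.card_biUnion hdisj).symm
  have hle : ((univ : Finset (Fin k)).biUnion (fun j => C (i, j))).card ≤ m := by
    calc _ ≤ (univ : Finset (Fin m)).card := Finset.card_le_card (Finset.subset_univ _)
      _ = m := by simp
  have hge : k * (m / k + 1) ≤ ∑ j : Fin k, (C (i, j)).card := by
    calc k * (m / k + 1) = ∑ _j : Fin k, (m / k + 1) := by simp [mul_comm]
      _ ≤ _ := Finset.sum_le_sum fun j _ => h j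
  have hmul : k * (m / k + 1) = k * (m / k) + k := by ring
  have hmod := Nat.div_add_mod m k
  have hlt := Nat.mod_lt m hk
  have : k * (m / k) + k ≤ m := by linarith [hsum ▸ hge, hle]
  linarith

lemma inj_small {m k N : ℕ} (hk : 3 ≤ k) {C : Fin N × Fin k → Finset (Fin m)}
    (hU : UniquelyResolvable N C) (hres : IsResolution C Prod.fst)
    (j0 : Fin N → Fin k) :
    Function.Injective (fun i => C (i, j0 i)) := by
  intro i1 i2 hEq
  simp only at hEq
  by_contra hne
  obtain ⟨-, f0, hf0, huniq⟩ := hU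
  obtain ⟨σ0, hσ0⟩ := huniq Prod.fst hres
  set a : Fin N × Fin k := (i1, j0 i1) with ha
  set b : Fin N × Fin k := (i2, j0 i2) with hb
  set gsw := Equiv.swap a b with hg
  have hCg : ∀ p, C (gsw p) = C p := by
    intro p
    rcases eq_or_ne p a with rfl | hpa
    · rw [hg, Equiv.swap_apply_left]; exact hEq.symm
    rcases eq_or_ne p b with rfl | hpb
    · rw [hg, Equiv.swap_apply_right]; exact hEq
    · rw [hg, Equiv.swap_apply_of_ne_of_ne hpa hpb]
  set f' : Fin N × Fin k → Fin N := fun p => (gsw p).1 with hf'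
  have hgg : ∀ p, gsw (gsw p) = p := fun p => Equiv.swap_apply_self a b p
  have hres' : IsResolution C f' := by
    intro i x
    obtain ⟨p, ⟨hp1, hp2⟩, hup⟩ := hres i x
    refine ⟨gsw p, ⟨?_, ?_⟩, ?_⟩
    · show (gsw (gsw p)).1 = i; rw [hgg]; exact hp1
    · rw [hCg p]; exact hp2
    · intro q hq
      have hq1 : (gsw q).1 = i := hq.1
      have hq2 : x ∈ C (gsw q) := by rw [hCg q]; exact hq.2
      have : gsw q = p := hup (gsw q) ⟨hq1, hq2⟩
      calc q = gsw (gsw q) := (hgg q).symm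
        _ = gsw p := by rw [this]
  obtain ⟨σ, hσ⟩ := huniq f' hres'
  have hτ : ∀ p : Fin N × Fin k, f' p = σ (σ0.symm p.1) := by
    intro p
    have h1 : f' p = σ (f0 p) := congrFun hσ p
    have h2 : p.1 = σ0 (f0 p) := congrFun hσ0 p
    rw [h1, h2, Equiv.symm_apply_apply]
  have hj' : ∃ j' : Fin k, j' ≠ j0 i1 := by
    by_cases hc : j0 i1 = ⟨0, by omega⟩
    · exact ⟨⟨1, by omega⟩, by rw [hc]; simp [Fin.ext_iff]⟩
    · exact ⟨⟨0, by omega⟩, fun hcontra => hc hcontra.symm⟩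
  obtain ⟨j', hj'⟩ := hj'
  have h1 : f' (i1, j') = i1 := by
    have hna : (i1, j') ≠ a := fun hcontra => hj' (congrArg Prod.snd hcontra)
    have hnb : (i1, j') ≠ b := fun hcontra => hne (congrArg Prod.fst hcontra)
    show (gsw (i1, j')).1 = i1
    rw [hg, Equiv.swap_apply_of_ne_of_ne hna hnb]
  have h2 : f' a = i2 := by
    show (gsw a).1 = i2
    rw [hg, Equiv.swap_apply_left]
  have e1 := (hτ (i1, j')).symm.trans h1
  have e2 := (hτ a).symm.trans h2
  rw [show (a.1 = i1) from rfl] at e2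
  exact hne (e1.symm.trans e2)

lemma comb {m k N : ℕ} (hk : 3 ≤ k)
    (h : ∃ C : Fin N × Fin k → Finset (Fin m),
      UniquelyResolvable N C ∧ IsResolution C Prod.fst) :
    N ≤ ∑ i ∈ Finset.range (m / k + 1), m.choose i := by
  obtain ⟨C, hU, hres⟩ := h
  choose j0 hj0 using fun i => exists_small (by omega) hres i
  have hinj := inj_small hk hU hres j0
  have hsub : ∀ i : Fin N, C (i, j0 i) ∈ (Finset.range (m / k + 1)).biUnion
      (fun c => Finset.powersetCard c (univ : Finset (Fin m))) := by
    intro i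
    simp only [Finset.mem_biUnion, Finset.mem_range, Finset.mem_powersetCard_univ]
    exact ⟨(C (i, j0 i)).card, Nat.lt_succ_of_le (hj0 i), rfl⟩
  calc N = (univ : Finset (Fin N)).card := by simp
    _ ≤ ((Finset.range (m / k + 1)).biUnion
        (fun c => Finset.powersetCard c (univ : Finset (Fin m)))).card :=
      Finset.card_le_card_of_injOn _ (fun i _ => hsub i) hinj.injOn
    _ ≤ ∑ c ∈ Finset.range (m / k + 1),
        (Finset.powersetCard c (univ : Finset (Fin m))).card := Finset.card_biUnion_le
    _ = ∑ c ∈ Finset.range (m / k + 1), m.choose c := by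
      simp [Finset.card_powersetCard]

lemma analytic (m k : ℕ) (hk3 : 3 ≤ k) (hkm : 2 * k ≤ m) :
    ((∑ i ∈ Finset.range (m / k + 1), m.choose i : ℕ) : ℝ)
      ≤ 2 ^ ((m : ℝ) * H2 (1 / (k : ℝ))) := by
  have hk0 : (0:ℝ) < k := by
    have : (0:ℕ) < k := by omega
    exact_mod_cast this
  set p : ℝ := 1 / k with hp
  have hp0 : 0 < p := by positivity
  have hp2 : p ≤ 1 / 2 := by
    rw [hp]
    apply div_le_div_of_nonneg_left (by norm_num) (by norm_num)
    have : (2:ℕ) ≤ k := by omega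
    exact_mod_cast this
  have hq0 : (0:ℝ) < 1 - p := by linarith
  have hpq : p ≤ 1 - p := by linarith
  set q : ℝ := 1 - p with hq
  set t := m / k with ht
  have htm : t ≤ m := Nat.div_le_self m k
  have htp : (t:ℝ) ≤ (m:ℝ) * p := by
    rw [hp, mul_one_div]
    exact Nat.cast_div_le
  set A := p ^ t * q ^ (m - t) with hA
  have hA0 : 0 < A := by positivity
  have hterm : ∀ i ∈ Finset.range (t + 1),
      (m.choose i : ℝ) * A ≤ p ^ i * q ^ (m - i) * (m.choose i : ℝ) := by
    intro i hi
    rw [Finset.mem_range] at hi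
    have hit : i ≤ t := by omega
    have key : A ≤ p ^ i * q ^ (m - i) := by
      have e1 : p ^ t = p ^ i * p ^ (t - i) := by rw [← pow_add]; congr 1; omega
      have e2 : q ^ (m - i) = q ^ (t - i) * q ^ (m - t) := by rw [← pow_add]; congr 1; omega
      rw [hA, e1, e2]
      have h3 : p ^ (t - i) ≤ q ^ (t - i) := pow_le_pow_left₀ hp0.le hpq _
      calc p ^ i * p ^ (t - i) * q ^ (m - t)
          ≤ p ^ i * q ^ (t - i) * q ^ (m - t) := by
            apply mul_le_mul_of_nonneg_right _ (by positivity)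
            exact mul_le_mul_of_nonneg_left h3 (by positivity)
        _ = p ^ i * (q ^ (t - i) * q ^ (m - t)) := by ring
    calc (m.choose i : ℝ) * A ≤ (m.choose i : ℝ) * (p ^ i * q ^ (m - i)) :=
          mul_le_mul_of_nonneg_left key (by positivity)
      _ = p ^ i * q ^ (m - i) * (m.choose i : ℝ) := by ring
  have hsum : (∑ i ∈ Finset.range (t + 1), (m.choose i : ℝ)) * A ≤ 1 := by
    rw [Finset.sum_mul]
    calc ∑ i ∈ Finset.range (t + 1), (m.choose i : ℝ) * A
        ≤ ∑ i ∈ Finset.range (t + 1), p ^ i * q ^ (m - i) * (m.choose i : ℝ) :=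
          Finset.sum_le_sum hterm
      _ ≤ ∑ i ∈ Finset.range (m + 1), p ^ i * q ^ (m - i) * (m.choose i : ℝ) :=
          Finset.sum_le_sum_of_subset_of_nonneg
            (Finset.range_subset_range.mpr (by omega)) (fun i _ _ => by positivity)
      _ = (p + q) ^ m := (add_pow p q m).symm
      _ = 1 := by rw [hq]; ring_nf
  have hS : (∑ i ∈ Finset.range (t + 1), (m.choose i : ℝ)) ≤ A⁻¹ := by
    rw [← one_div]
    exact (le_div_iff₀ hA0).mpr hsum
  have h2p : (2:ℝ) ^ Real.logb 2 p = p := Real.rpow_logb two_pos (by norm_num) hp0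
  have h2q : (2:ℝ) ^ Real.logb 2 q = q := Real.rpow_logb two_pos (by norm_num) hq0
  have hcast : ((m:ℝ) - (t:ℝ)) = ((m - t : ℕ) : ℝ) := by
    rw [Nat.cast_sub htm]
  have hAe : A = (2:ℝ) ^ ((t:ℝ) * Real.logb 2 p + ((m:ℝ) - (t:ℝ)) * Real.logb 2 q) := by
    rw [Real.rpow_add two_pos, hA]
    congr 1
    · rw [mul_comm ((t:ℝ)) (Real.logb 2 p), Real.rpow_mul (by norm_num : (0:ℝ) ≤ 2),
        h2p, Real.rpow_natCast]
    · rw [hcast, mul_comm (((m - t : ℕ)):ℝ) (Real.logb 2 q),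
        Real.rpow_mul (by norm_num : (0:ℝ) ≤ 2), h2q, Real.rpow_natCast]
  have hAinv : A⁻¹ = (2:ℝ) ^ (-((t:ℝ) * Real.logb 2 p + ((m:ℝ) - (t:ℝ)) * Real.logb 2 q)) := by
    rw [hAe, ← Real.rpow_neg (by norm_num : (0:ℝ) ≤ 2)]
  have hLpq : Real.logb 2 p ≤ Real.logb 2 q :=
    Real.logb_le_logb_of_le (by norm_num) hp0 hpq
  have hexp : -((t:ℝ) * Real.logb 2 p + ((m:ℝ) - (t:ℝ)) * Real.logb 2 q)
      ≤ (m:ℝ) * H2 p := by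
    have hd : (0:ℝ) ≤ (m:ℝ) * p - t := by linarith
    have := mul_le_mul_of_nonneg_left hLpq hd
    simp only [H2, hq]
    nlinarith [this]
  calc ((∑ i ∈ Finset.range (m / k + 1), m.choose i : ℕ) : ℝ)
      = ∑ i ∈ Finset.range (t + 1), (m.choose i : ℝ) := by push_cast [ht]; ring
    _ ≤ A⁻¹ := hS
    _ = (2:ℝ) ^ (-((t:ℝ) * Real.logb 2 p + ((m:ℝ) - (t:ℝ)) * Real.logb 2 q)) := hAinv
    _ ≤ (2:ℝ) ^ ((m:ℝ) * H2 p) := Real.rpow_le_rpow_of_exponent_le (by norm_num) hexp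

/-- For `3 ≤ k` with `2k ≤ m`, `P k m ≤ 2 ^ (m · H₂(1/k))`. -/
theorem stmt12 (m k : ℕ) (hk : 3 ≤ k) (hkm : 2 * k ≤ m) :
    ((P k m : ℕ) : ℝ) ≤ 2 ^ ((m : ℝ) * H2 (1 / (k : ℝ))) := by
  have h0 : (0:ℕ) ∈ {N | ∃ C : Fin N × Fin k → Finset (Fin m),
      UniquelyResolvable N C ∧ IsResolution C Prod.fst} :=
    ⟨fun p => Fin.elim0 p.1, ⟨fun j => Fin.elim0 j.1, Prod.fst, fun i => i.elim0,
      fun f' _ => ⟨Equiv.refl _, funext fun p => Fin.elim0 p.1⟩⟩, fun i => i.elim0⟩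
  have hP : P k m ≤ ∑ i ∈ Finset.range (m / k + 1), m.choose i := by
    rw [P]
    exact csSup_le ⟨0, h0⟩ (fun N hN => comb hk hN)
  calc ((P k m : ℕ) : ℝ) ≤ ((∑ i ∈ Finset.range (m / k + 1), m.choose i : ℕ) : ℝ) := by
        exact_mod_cast hP
    _ ≤ _ := analytic m k hk hkm
end

section
/- Let k ≥ 2 be an integer such that n > 2^{m·H_2(1/k)}. Then g(n,m) ≤ k·n. -/
open Finset

/-!
Suppose `C` has more than `k n` members and is uniquely resolvable into `n` classes. Each class
partitions `[m]`, so it has fewer than `k` members of size larger than `m / k`; hence more than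
`n` members have size at most `m / k`. By the Bernoulli-weight bound there are at most
`2 ^ (m H₂(1/k)) < n` such subsets of `[m]`, so two members coincide, and swapping them yields a
second resolution that is not a relabelling of the first.
-/

open Real

lemma log_two_mul_H2 (p : ℝ) : log 2 * H2 p = binEntropy p := by
  simp only [H2, binEntropy, logb, log_inv]
  field_simp
  ring

lemma two_rpow_mul_H2 (x p : ℝ) : (2 : ℝ) ^ (x * H2 p) = exp (x * binEntropy p) := by
  rw [rpow_def_of_pos two_pos, ← log_two_mul_H2]
  ring_nf

lemma one_le_exp_mul_binEntropy_mul_pow {p : ℝ} (hp0 : 0 < p) (hp : p ≤ 1 / 2) {m i : ℕ}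
    (him : i ≤ m) (hi : (i : ℝ) ≤ m * p) :
    1 ≤ exp (m * binEntropy p) * (p ^ i * (1 - p) ^ (m - i)) := by
  have hq0 : 0 < 1 - p := by linarith
  have hlog : log p ≤ log (1 - p) := log_le_log hp0 (by linarith)
  rw [← exp_log (pow_pos hp0 i), ← exp_log (pow_pos hq0 (m - i)), ← exp_add, ← exp_add,
    one_le_exp_iff, log_pow, log_pow, Nat.cast_sub him]
  -- the exponent is `(m p - i) (log (1 - p) - log p)`
  have : 0 ≤ (m * p - i) * (log (1 - p) - log p) :=
    mul_nonneg (by linarith) (by linarith)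
  simp only [binEntropy, log_inv]
  linarith

/-- Each such set has Bernoulli weight `p ^ #s * (1 - p) ^ (card α - #s)` at least
`exp (-card α * binEntropy p)`, and the weights of all subsets sum to `1`. -/
lemma card_filter_card_le_mul_le_exp_mul_binEntropy {α : Type*} [Fintype α] {p : ℝ}
    (hp0 : 0 < p) (hp : p ≤ 1 / 2) :
    (#{s : Finset α | (#s : ℝ) ≤ Fintype.card α * p} : ℝ)
      ≤ exp (Fintype.card α * binEntropy p) := by
  set m := Fintype.card α
  set w : Finset α → ℝ := fun s ↦ exp (m * binEntropy p) * (p ^ #s * (1 - p) ^ (m - #s))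
  have hw : ∀ s, 0 ≤ w s := fun s ↦ by
    have : 0 ≤ 1 - p := by linarith
    positivity
  calc (#{s : Finset α | (#s : ℝ) ≤ m * p} : ℝ)
      = ∑ s : Finset α with (#s : ℝ) ≤ m * p, 1 := by simp
    _ ≤ ∑ s : Finset α with (#s : ℝ) ≤ m * p, w s := by
      refine sum_le_sum fun s hs ↦ ?_
      exact one_le_exp_mul_binEntropy_mul_pow hp0 hp (card_le_univ s) (mem_filter.mp hs).2
    _ ≤ ∑ s : Finset α, w s :=
      sum_le_sum_of_subset_of_nonneg (filter_subset _ _) fun s _ _ ↦ hw s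
    _ = exp (m * binEntropy p) := by
      rw [← mul_sum, Fintype.sum_pow_mul_eq_add_pow, add_sub_cancel, one_pow, mul_one]

namespace IsResolution

variable {ι : Type*} {m n : ℕ} {C : ι → Finset (Fin m)} {f : ι → Fin n}

lemma disjoint (hf : IsResolution C f) {a b : ι} (hab : a ≠ b) (hfab : f a = f b) :
    Disjoint (C a) (C b) := by
  rw [Finset.disjoint_left]
  intro x hxa hxb
  obtain ⟨_, _, hu⟩ := hf (f a) x
  exact hab ((hu a ⟨rfl, hxa⟩).trans (hu b ⟨hfab.symm, hxb⟩).symm)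

lemma comp_perm (hf : IsResolution C f) (σ : Equiv.Perm ι) (hσ : ∀ j, C (σ j) = C j) :
    IsResolution C (f ∘ σ) := by
  intro i x
  obtain ⟨b, hb, hu⟩ := hf i x
  refine ⟨σ.symm b, ⟨by simpa using hb.1, by rw [← hσ, σ.apply_symm_apply]; exact hb.2⟩,
    fun a ⟨ha, hxa⟩ ↦ ?_⟩
  rw [Equiv.eq_symm_apply]
  exact hu (σ a) ⟨ha, by rwa [hσ]⟩

lemma sum_card_fiber [Fintype ι] (hf : IsResolution C f) (i : Fin n) :
    ∑ j with f j = i, #(C j) = m := by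
  classical
  rw [← card_biUnion fun a ha b hb hab ↦
    hf.disjoint hab ((mem_filter.mp ha).2.trans (mem_filter.mp hb).2.symm)]
  convert card_univ (α := Fin m) using 2
  · ext x
    obtain ⟨j, hj, _⟩ := hf i x
    simpa using ⟨j, hj⟩
  · simp

lemma card_filter_div_lt_card_lt [Fintype ι] (hf : IsResolution C f) {k : ℕ} (hk : 0 < k)
    (i : Fin n) : #{j | f j = i ∧ m / k < #(C j)} < k := by
  by_contra! hle
  have hsum : k * (m / k + 1) ≤ m := calc
    k * (m / k + 1) ≤ #{j | f j = i ∧ m / k < #(C j)} * (m / k + 1) := by gcongr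
    _ ≤ ∑ j with f j = i ∧ m / k < #(C j), #(C j) := by
      simpa using card_nsmul_le_sum _ (fun j ↦ #(C j)) _ fun j hj ↦ (mem_filter.mp hj).2.2
    _ ≤ ∑ j with f j = i, #(C j) :=
      sum_le_sum_of_subset fun j ↦ by simp only [mem_filter, mem_univ, true_and]; exact And.left
    _ = m := hf.sum_card_fiber i
  exact (Nat.lt_mul_div_succ m hk).not_ge hsum

lemma card_filter_div_lt_card_le [Fintype ι] (hf : IsResolution C f) {k : ℕ} (hk : 0 < k) :
    #{j | m / k < #(C j)} ≤ n * (k - 1) := calc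
  #{j | m / k < #(C j)} = ∑ i, #{j | f j = i ∧ m / k < #(C j)} := by
    rw [card_eq_sum_card_fiberwise fun j _ ↦ mem_univ (f j)]
    simp only [filter_filter, and_comm]
  _ ≤ ∑ _i : Fin n, (k - 1) :=
    sum_le_sum fun i _ ↦ Nat.le_sub_one_of_lt (hf.card_filter_div_lt_card_lt hk i)
  _ = n * (k - 1) := by simp

end IsResolution

/-- Swapping two equal components that do not cover `[m]` gives a second resolution, and it is
not a relabelling of the first: the class of one of them still contains a third component. -/
lemma UniquelyResolvable.injOn_ne_univ {ι : Type*} {m n : ℕ} {C : ι → Finset (Fin m)}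
    (h : UniquelyResolvable n C) : Set.InjOn C {j | C j ≠ univ} := by
  classical
  obtain ⟨hne, f, hf, huniq⟩ := h
  intro j hj j' _ hCjj'
  by_contra hjj'
  have hfjj' : f j ≠ f j' := fun h ↦ by
    obtain ⟨x, hx⟩ := hne j
    exact disjoint_left.mp (hf.disjoint hjj' h) hx (hCjj' ▸ hx)
  obtain ⟨x, hx⟩ : ∃ x, x ∉ C j := by simpa [eq_univ_iff_forall] using hj
  obtain ⟨a, ⟨ha, hxa⟩, -⟩ := hf (f j) x
  have haj : a ≠ j := by rintro rfl; exact hx hxa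
  have haj' : a ≠ j' := by rintro rfl; exact hfjj' ha.symm
  have hswap : ∀ b, C (Equiv.swap j j' b) = C b := fun b ↦ by
    rcases eq_or_ne b j with rfl | hbj
    · simp [hCjj']
    rcases eq_or_ne b j' with rfl | hbj'
    · simp [← hCjj']
    · rw [Equiv.swap_apply_of_ne_of_ne hbj hbj']
  obtain ⟨σ, hσ⟩ := huniq _ (hf.comp_perm (Equiv.swap j j') hswap)
  have hσj : σ (f j) = f j' := by simpa using (congrFun hσ j).symm
  have hσa : σ (f j) = f j := by
    simpa [Equiv.swap_apply_of_ne_of_ne haj haj', ha] using (congrFun hσ a).symm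
  exact hfjj' (hσa.symm.trans hσj)

/-- If `k ≥ 2` and `n > 2 ^ (m · H₂(1/k))`, then `g n m ≤ k n`. -/
theorem stmt13 (m n k : ℕ) (hk : 2 ≤ k)
    (hn : (2 : ℝ) ^ ((m : ℝ) * H2 (1 / (k : ℝ))) < (n : ℝ)) :
    g n m ≤ k * n := by
  refine csSup_le' fun L ⟨C, hC⟩ ↦ ?_
  obtain ⟨f, hf, -⟩ := hC.2
  have hproper : ∀ j, #(C j) ≤ m / k → C j ≠ univ := fun j hj hu ↦ by
    have hm : 0 < m := by simpa [hu] using (hC.1 j).card_pos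
    rw [hu, card_univ, Fintype.card_fin] at hj
    exact (Nat.div_lt_self hm hk).not_ge hj
  have hsmall : #{j | #(C j) ≤ m / k} ≤ #{s : Finset (Fin m) | (#s : ℝ) ≤ m * (1 / k)} := by
    refine card_le_card_of_injOn C (fun j hj ↦ ?_)
      (hC.injOn_ne_univ.mono fun j hj ↦ hproper j (mem_filter.mp hj).2)
    simp only [coe_filter, mem_univ, true_and, Set.mem_ofPred_eq, mul_one_div] at hj ⊢
    exact (Nat.cast_le.mpr hj).trans Nat.cast_div_le
  have hfew : #{s : Finset (Fin m) | (#s : ℝ) ≤ m * (1 / k)} < n := by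
    have hk' : (2 : ℝ) ≤ k := by exact_mod_cast hk
    have := card_filter_card_le_mul_le_exp_mul_binEntropy (α := Fin m) (p := 1 / k)
      (by positivity) (one_div_le_one_div_of_le two_pos hk')
    rw [Fintype.card_fin, ← two_rpow_mul_H2] at this
    exact_mod_cast this.trans_lt hn
  have hlarge := hf.card_filter_div_lt_card_le (by omega : 0 < k)
  have hsplit := card_filter_add_card_filter_not (s := univ) fun j ↦ m / k < #(C j)
  simp only [not_lt, card_univ, Fintype.card_fin] at hsplit
  have hkn : n * (k - 1) + n = k * n := by
    obtain ⟨k, rfl⟩ := Nat.exists_eq_add_of_le' (by omega : 1 ≤ k)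
    simp only [add_tsub_cancel_right]
    ring
  omega
end
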